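/- arXiv:2010.07970 — 8 statements merged into one kernel-verified Lean document; each statement's English description precedes it below -/
import Mathlib

section
/- Let n ≥ 3 and let S be a finite subset of ℂ× with |S| ≤ n. Then |δ²S| ≤ f(n), where f(n) = n(n-1)(n-2)(n-3)/4 + n(n-1)(n-2) + 2n(n-1) + 1. -/
open scoped Pointwise

/-- `f(n) = n(n-1)(n-2)(n-3)/4 + n(n-1)(n-2) + 2n(n-1) + 1`. -/
def fBound (n : ℕ) : ℕ :=
  n * (n - 1) * (n - 2) * (n - 3) / 4 + n * (n - 1) * (n - 2) + 2 * (n * (n - 1)) + 1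

namespace CardDeltaSq

noncomputable def msym : Sym2 ℂˣ → ℂˣ := Sym2.lift ⟨fun x y => x * y, mul_comm⟩

@[simp] lemma msym_mk (a b : ℂˣ) : msym s(a, b) = a * b := rfl

lemma key (a b c d : ℂˣ) : (a / b) / (c / d) = (a * d) / (b * c) := by
  simp only [div_eq_mul_inv, mul_inv, inv_inv]; ac_rfl

lemma fiber_le {α β : Type*} [DecidableEq β] (s : Finset α) (g : α → β) (k : ℕ)
    (h : ∀ b ∈ s.image g, k ≤ (s.filter fun a => g a = b).card) :
    k * (s.image g).card ≤ s.card := by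
  calc k * (s.image g).card = ∑ _b ∈ s.image g, k := by
        rw [Finset.sum_const, smul_eq_mul, mul_comm]
    _ ≤ ∑ b ∈ s.image g, (s.filter fun a => g a = b).card := Finset.sum_le_sum h
    _ = s.card := (Finset.card_eq_sum_card_fiberwise (fun a ha => Finset.mem_image_of_mem g ha)).symm

abbrev Q4 := (ℂˣ × ℂˣ) × (ℂˣ × ℂˣ)

def pc (q : Q4) : Prop :=
  q.1.1 = q.1.2 ∨ q.1.1 = q.2.1 ∨ q.2.2 = q.1.2 ∨ q.2.2 = q.2.1

def f4 (q : Q4) : ℂˣ := (q.1.1 * q.2.2) / (q.1.2 * q.2.1)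

lemma m_eq (m : ℕ) : m * (m - 1) = m * m - m := by
  cases m with
  | zero => simp
  | succ k => simp [Nat.succ_sub_one, Nat.mul_succ]

end CardDeltaSq

open CardDeltaSq

/-- For `n ≥ 3` and a finite subset `S ⊆ ℂˣ` with `|S| ≤ n`,
`|δ²S| ≤ f(n)`, where `δS = S·S⁻¹`. -/
theorem card_delta_sq_le (n : ℕ) (hn : 3 ≤ n) (S : Finset ℂˣ) (hS : S.card ≤ n) :
    (((S / S) / (S / S)) : Finset ℂˣ).card ≤ fBound n := by
  classical
  unfold fBound
  rcases S.eq_empty_or_nonempty with rfl | hne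
  · simp
  set P : Finset Q4 := (S ×ˢ S) ×ˢ (S ×ˢ S) with hP
  set Qc := P.filter pc with hQc
  set Qs := P.filter (fun q => ¬ pc q ∧ q.1.1 = q.2.2 ∧ q.1.2 = q.2.1) with hQs
  set Qad := P.filter (fun q => ¬ pc q ∧ q.1.1 = q.2.2 ∧ q.1.2 ≠ q.2.1) with hQad
  set Qbc := P.filter (fun q => ¬ pc q ∧ q.1.1 ≠ q.2.2 ∧ q.1.2 = q.2.1) with hQbc
  set Qd := P.filter (fun q => ¬ pc q ∧ q.1.1 ≠ q.2.2 ∧ q.1.2 ≠ q.2.1) with hQd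
  -- step 1 : covering
  have cover : ((S / S) / (S / S)) ⊆
      (Qc.image f4 ∪ Qs.image f4) ∪ (Qad.image f4 ∪ (Qbc.image f4 ∪ Qd.image f4)) := by
    intro x hx
    rw [Finset.mem_div] at hx
    obtain ⟨u, hu, v, hv, rfl⟩ := hx
    rw [Finset.mem_div] at hu hv
    obtain ⟨a, ha, b, hb, rfl⟩ := hu
    obtain ⟨c, hc, d, hd, rfl⟩ := hv
    have hq : ((a,b),(c,d)) ∈ P := by simp [hP, ha, hb, hc, hd]
    have hx' : a / b / (c / d) = f4 ((a,b),(c,d)) := key a b c d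
    rw [hx']
    by_cases h1 : pc ((a,b),(c,d))
    · exact Finset.mem_union_left _ (Finset.mem_union_left _
        (Finset.mem_image_of_mem _ (Finset.mem_filter.2 ⟨hq, h1⟩)))
    · by_cases h2 : a = d
      · by_cases h3 : b = c
        · exact Finset.mem_union_left _ (Finset.mem_union_right _
            (Finset.mem_image_of_mem _ (Finset.mem_filter.2 ⟨hq, h1, h2, h3⟩)))
        · exact Finset.mem_union_right _ (Finset.mem_union_left _
            (Finset.mem_image_of_mem _ (Finset.mem_filter.2 ⟨hq, h1, h2, h3⟩)))
      · by_cases h3 : b = c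
        · exact Finset.mem_union_right _ (Finset.mem_union_right _ (Finset.mem_union_left _
            (Finset.mem_image_of_mem _ (Finset.mem_filter.2 ⟨hq, h1, h2, h3⟩))))
        · exact Finset.mem_union_right _ (Finset.mem_union_right _ (Finset.mem_union_right _
            (Finset.mem_image_of_mem _ (Finset.mem_filter.2 ⟨hq, h1, h2, h3⟩))))
  -- card of S/S
  have cardD : (S / S).card ≤ n * (n - 1) + 1 := by
    have hsub : (S / S) ⊆ insert 1 (S.offDiag.image fun p => p.1 / p.2) := by
      intro x hx
      rw [Finset.mem_div] at hx
      obtain ⟨a, ha, b, hb, rfl⟩ := hx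
      by_cases h : a = b
      · simp [h]
      · exact Finset.mem_insert_of_mem
          (Finset.mem_image.2 ⟨(a, b), Finset.mem_offDiag.2 ⟨ha, hb, h⟩, rfl⟩)
    calc (S / S).card ≤ _ := Finset.card_le_card hsub
      _ ≤ (S.offDiag.image fun p => p.1 / p.2).card + 1 := Finset.card_insert_le _ _
      _ ≤ S.offDiag.card + 1 := by gcongr; exact Finset.card_image_le
      _ ≤ n * (n - 1) + 1 := by
          rw [Finset.offDiag_card]
          have h1 : S.card * (S.card - 1) ≤ n * (n - 1) :=
            Nat.mul_le_mul hS (Nat.sub_le_sub_right hS 1)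
          have h2 := m_eq S.card
          omega
  have cardDerase : ((S / S).erase 1).card ≤ n * (n - 1) := by
    obtain ⟨a, ha⟩ := hne
    have h1 : (1 : ℂˣ) ∈ S / S := by
      rw [Finset.mem_div]; exact ⟨a, ha, a, ha, div_self' a⟩
    rw [Finset.card_erase_of_mem h1]
    omega
  -- (A)
  have hA : (Qc.image f4 ∪ Qs.image f4).card ≤ 2 * (n * (n - 1)) + 1 := by
    have hsub : Qc.image f4 ∪ Qs.image f4 ⊆
        (S / S) ∪ ((S / S).erase 1).image (fun x => x * x) := by
      intro x hx
      rcases Finset.mem_union.1 hx with hx | hx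
      · obtain ⟨q, hq, rfl⟩ := Finset.mem_image.1 hx
        obtain ⟨⟨a, b⟩, c, d⟩ := q
        rw [hQc, Finset.mem_filter] at hq
        obtain ⟨hqP, h⟩ := hq
        simp only [hP, Finset.mem_product] at hqP
        obtain ⟨⟨ha, hb⟩, hc, hd⟩ := hqP
        apply Finset.mem_union_left
        unfold pc at h
        unfold f4
        simp only at h ⊢
        rcases h with h | h | h | h
        · subst h; rw [mul_div_mul_left_eq_div]; exact Finset.div_mem_div hd hc
        · subst h; rw [mul_comm b _, mul_div_mul_left_eq_div]; exact Finset.div_mem_div hd hb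
        · subst h; rw [mul_comm a _, mul_div_mul_left_eq_div]; exact Finset.div_mem_div ha hc
        · subst h; rw [mul_div_mul_right_eq_div]; exact Finset.div_mem_div ha hb
      · obtain ⟨q, hq, rfl⟩ := Finset.mem_image.1 hx
        obtain ⟨⟨a, b⟩, c, d⟩ := q
        rw [hQs, Finset.mem_filter] at hq
        obtain ⟨hqP, hnpc, had, hbc⟩ := hq
        simp only [hP, Finset.mem_product] at hqP
        obtain ⟨⟨ha, hb⟩, hc, hd⟩ := hqP
        simp only at had hbc
        apply Finset.mem_union_right
        unfold pc at hnpc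
        push_neg at hnpc
        have hab : a ≠ b := hnpc.1
        unfold f4
        simp only
        rw [← had, ← hbc]
        refine Finset.mem_image.2 ⟨a / b,
          Finset.mem_erase.2 ⟨div_ne_one.2 hab, Finset.div_mem_div ha hb⟩, ?_⟩
        rw [div_mul_div_comm]
    calc (Qc.image f4 ∪ Qs.image f4).card
        ≤ ((S / S) ∪ ((S / S).erase 1).image (fun x => x * x)).card := Finset.card_le_card hsub
      _ ≤ (S / S).card + (((S / S).erase 1).image (fun x => x * x)).card := Finset.card_union_le _ _
      _ ≤ (n * (n - 1) + 1) + ((S / S).erase 1).card :=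
          Nat.add_le_add cardD Finset.card_image_le
      _ ≤ 2 * (n * (n - 1)) + 1 := by omega
  -- cardinality of fibered pieces
  have hQadcard : Qad.card ≤ n * ((n - 1) * (n - 2)) := by
    have hsub : Qad ⊆ S.biUnion (fun a => (S.erase a).biUnion (fun b =>
        ((S.erase a).erase b).image (fun c => ((a, b), (c, a))))) := by
      intro q hq
      obtain ⟨⟨a, b⟩, c, d⟩ := q
      rw [hQad, Finset.mem_filter] at hq
      obtain ⟨hqP, hnpc, had, hbc⟩ := hq
      simp only [hP, Finset.mem_product] at hqP
      obtain ⟨⟨ha, hb⟩, hc, hd⟩ := hqP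
      simp only at had hbc
      unfold pc at hnpc; push_neg at hnpc
      obtain ⟨h1, h2, h3, h4⟩ := hnpc
      simp only at h1 h2 h3 h4
      subst had
      simp only [Finset.mem_biUnion, Finset.mem_image, Finset.mem_erase]
      exact ⟨a, ha, b, ⟨Ne.symm h1, hb⟩, c, ⟨Ne.symm hbc, Ne.symm h2, hc⟩, rfl⟩
    calc Qad.card ≤ (S.biUnion (fun a => (S.erase a).biUnion (fun b =>
        ((S.erase a).erase b).image (fun c => ((a, b), (c, a)))))).card :=
          Finset.card_le_card hsub
      _ ≤ ∑ a ∈ S, ((S.erase a).biUnion (fun b =>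
            ((S.erase a).erase b).image (fun c => ((a, b), (c, a))))).card :=
          Finset.card_biUnion_le
      _ ≤ S.card * ((n - 1) * (n - 2)) := by
          apply Finset.sum_le_card_nsmul
          intro a ha
          calc ((S.erase a).biUnion _).card
              ≤ ∑ b ∈ S.erase a, (((S.erase a).erase b).image (fun c => ((a, b), (c, a)))).card :=
                Finset.card_biUnion_le
            _ ≤ (S.erase a).card * (n - 2) := by
                apply Finset.sum_le_card_nsmul
                intro b hb
                calc (((S.erase a).erase b).image (fun c => ((a, b), (c, a)))).card
                    ≤ ((S.erase a).erase b).card := Finset.card_image_le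
                  _ ≤ n - 2 := by
                      rw [Finset.card_erase_of_mem hb, Finset.card_erase_of_mem ha]
                      omega
            _ ≤ (n - 1) * (n - 2) := by
                have : (S.erase a).card ≤ n - 1 := by
                  rw [Finset.card_erase_of_mem ha]; omega
                exact Nat.mul_le_mul_right _ this
      _ ≤ n * ((n - 1) * (n - 2)) := Nat.mul_le_mul_right _ hS
  have hQbccard : Qbc.card ≤ n * ((n - 1) * (n - 2)) := by
    have hsub : Qbc ⊆ S.biUnion (fun b => (S.erase b).biUnion (fun a =>
        ((S.erase b).erase a).image (fun d => ((a, b), (b, d))))) := by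
      intro q hq
      obtain ⟨⟨a, b⟩, c, d⟩ := q
      rw [hQbc, Finset.mem_filter] at hq
      obtain ⟨hqP, hnpc, had, hbc⟩ := hq
      simp only [hP, Finset.mem_product] at hqP
      obtain ⟨⟨ha, hb⟩, hc, hd⟩ := hqP
      simp only at had hbc
      unfold pc at hnpc; push_neg at hnpc
      obtain ⟨h1, h2, h3, h4⟩ := hnpc
      simp only at h1 h2 h3 h4
      subst hbc
      simp only [Finset.mem_biUnion, Finset.mem_image, Finset.mem_erase]
      exact ⟨b, hb, a, ⟨h1, ha⟩, d, ⟨Ne.symm had, h3, hd⟩, rfl⟩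
    calc Qbc.card ≤ (S.biUnion (fun b => (S.erase b).biUnion (fun a =>
        ((S.erase b).erase a).image (fun d => ((a, b), (b, d)))))).card :=
          Finset.card_le_card hsub
      _ ≤ ∑ b ∈ S, ((S.erase b).biUnion (fun a =>
            ((S.erase b).erase a).image (fun d => ((a, b), (b, d))))).card :=
          Finset.card_biUnion_le
      _ ≤ S.card * ((n - 1) * (n - 2)) := by
          apply Finset.sum_le_card_nsmul
          intro b hb
          calc ((S.erase b).biUnion _).card
              ≤ ∑ a ∈ S.erase b, (((S.erase b).erase a).image (fun d => ((a, b), (b, d)))).card :=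
                Finset.card_biUnion_le
            _ ≤ (S.erase b).card * (n - 2) := by
                apply Finset.sum_le_card_nsmul
                intro a ha
                calc (((S.erase b).erase a).image (fun d => ((a, b), (b, d)))).card
                    ≤ ((S.erase b).erase a).card := Finset.card_image_le
                  _ ≤ n - 2 := by
                      rw [Finset.card_erase_of_mem ha, Finset.card_erase_of_mem hb]
                      omega
            _ ≤ (n - 1) * (n - 2) := by
                have : (S.erase b).card ≤ n - 1 := by
                  rw [Finset.card_erase_of_mem hb]; omega
                exact Nat.mul_le_mul_right _ this
      _ ≤ n * ((n - 1) * (n - 2)) := Nat.mul_le_mul_right _ hS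
  have hQdcard : Qd.card ≤ n * ((n - 1) * ((n - 2) * (n - 3))) := by
    have hsub : Qd ⊆ S.biUnion (fun a => (S.erase a).biUnion (fun b =>
        ((S.erase a).erase b).biUnion (fun c =>
          ((((S.erase a).erase b).erase c).image (fun d => ((a, b), (c, d))))))) := by
      intro q hq
      obtain ⟨⟨a, b⟩, c, d⟩ := q
      rw [hQd, Finset.mem_filter] at hq
      obtain ⟨hqP, hnpc, had, hbc⟩ := hq
      simp only [hP, Finset.mem_product] at hqP
      obtain ⟨⟨ha, hb⟩, hc, hd⟩ := hqP
      simp only at had hbc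
      unfold pc at hnpc; push_neg at hnpc
      obtain ⟨h1, h2, h3, h4⟩ := hnpc
      simp only at h1 h2 h3 h4
      simp only [Finset.mem_biUnion, Finset.mem_image, Finset.mem_erase]
      exact ⟨a, ha, b, ⟨Ne.symm h1, hb⟩, c, ⟨Ne.symm hbc, Ne.symm h2, hc⟩,
        d, ⟨h4, h3, Ne.symm had, hd⟩, rfl⟩
    calc Qd.card ≤ (S.biUnion (fun a => (S.erase a).biUnion (fun b =>
        ((S.erase a).erase b).biUnion (fun c =>
          ((((S.erase a).erase b).erase c).image (fun d => ((a, b), (c, d)))))))).card :=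
          Finset.card_le_card hsub
      _ ≤ ∑ a ∈ S, _ := Finset.card_biUnion_le
      _ ≤ S.card * ((n - 1) * ((n - 2) * (n - 3))) := by
          apply Finset.sum_le_card_nsmul
          intro a ha
          calc _ ≤ ∑ b ∈ S.erase a, _ := Finset.card_biUnion_le
            _ ≤ (S.erase a).card * ((n - 2) * (n - 3)) := by
                apply Finset.sum_le_card_nsmul
                intro b hb
                calc _ ≤ ∑ c ∈ (S.erase a).erase b, _ := Finset.card_biUnion_le
                  _ ≤ ((S.erase a).erase b).card * (n - 3) := by
                      apply Finset.sum_le_card_nsmul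
                      intro c hc
                      calc ((((S.erase a).erase b).erase c).image
                              (fun d => ((a, b), (c, d)))).card
                          ≤ (((S.erase a).erase b).erase c).card := Finset.card_image_le
                        _ ≤ n - 3 := by
                            rw [Finset.card_erase_of_mem hc, Finset.card_erase_of_mem hb,
                              Finset.card_erase_of_mem ha]
                            omega
                  _ ≤ (n - 2) * (n - 3) := by
                      have : ((S.erase a).erase b).card ≤ n - 2 := by
                        rw [Finset.card_erase_of_mem hb, Finset.card_erase_of_mem ha]; omega
                      exact Nat.mul_le_mul_right _ this
            _ ≤ (n - 1) * ((n - 2) * (n - 3)) := by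
                have : (S.erase a).card ≤ n - 1 := by
                  rw [Finset.card_erase_of_mem ha]; omega
                exact Nat.mul_le_mul_right _ this
      _ ≤ n * ((n - 1) * ((n - 2) * (n - 3))) := Nat.mul_le_mul_right _ hS
  have hB : 2 * (Qad.image f4).card ≤ n * (n - 1) * (n - 2) := by
    set ψ : Q4 → ℂˣ × Sym2 ℂˣ := fun q => (q.1.1, s(q.1.2, q.2.1)) with hψ
    have hsub : Qad.image f4 ⊆ (Qad.image ψ).image (fun p => (p.1 * p.1) / msym p.2) := by
      intro x hx
      obtain ⟨q, hq, rfl⟩ := Finset.mem_image.1 hx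
      refine Finset.mem_image.2 ⟨ψ q, Finset.mem_image_of_mem _ hq, ?_⟩
      obtain ⟨⟨a, b⟩, c, d⟩ := q
      rw [hQad, Finset.mem_filter] at hq
      obtain ⟨_, _, had, _⟩ := hq
      simp only at had
      unfold f4
      simp only [hψ, msym_mk]
      rw [had]
    have hfib : 2 * (Qad.image ψ).card ≤ Qad.card := by
      apply fiber_le
      intro p hp
      obtain ⟨q, hq, rfl⟩ := Finset.mem_image.1 hp
      obtain ⟨⟨a, b⟩, c, d⟩ := q
      have hq' := hq
      rw [hQad, Finset.mem_filter] at hq'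
      obtain ⟨hqP, hnpc, had, hbc⟩ := hq'
      simp only [hP, Finset.mem_product] at hqP
      obtain ⟨⟨ha, hb⟩, hc, hd⟩ := hqP
      simp only at had hbc
      unfold pc at hnpc; push_neg at hnpc
      obtain ⟨h1, h2, h3, h4⟩ := hnpc
      simp only at h1 h2 h3 h4
      have m1 : ((a, b), (c, d)) ∈ Qad.filter (fun q' => ψ q' = ψ ((a, b), (c, d))) :=
        Finset.mem_filter.2 ⟨hq, rfl⟩
      have m2 : ((a, c), (b, d)) ∈ Qad.filter (fun q' => ψ q' = ψ ((a, b), (c, d))) := by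
        refine Finset.mem_filter.2 ⟨Finset.mem_filter.2 ⟨by simp [hP, ha, hb, hc, hd], ?_, had, Ne.symm hbc⟩, ?_⟩
        · rintro (h | h | h | h)
          · exact h2 h
          · exact h1 h
          · exact h4 h
          · exact h3 h
        · simp only [hψ]
          rw [Prod.mk.injEq]
          exact ⟨rfl, Sym2.eq_swap⟩
      have hne : (((a, b), (c, d)) : Q4) ≠ ((a, c), (b, d)) :=
        fun h => hbc (congrArg (fun z : Q4 => z.1.2) h)
      exact Finset.one_lt_card.2 ⟨_, m1, _, m2, hne⟩
    calc 2 * (Qad.image f4).card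
        ≤ 2 * ((Qad.image ψ).image (fun p => (p.1 * p.1) / msym p.2)).card :=
          Nat.mul_le_mul_left 2 (Finset.card_le_card hsub)
      _ ≤ 2 * (Qad.image ψ).card := Nat.mul_le_mul_left 2 Finset.card_image_le
      _ ≤ Qad.card := hfib
      _ ≤ n * ((n - 1) * (n - 2)) := hQadcard
      _ = n * (n - 1) * (n - 2) := (mul_assoc _ _ _).symm
  have hC : 2 * (Qbc.image f4).card ≤ n * (n - 1) * (n - 2) := by
    set ψ : Q4 → ℂˣ × Sym2 ℂˣ := fun q => (q.1.2, s(q.1.1, q.2.2)) with hψ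
    have hsub : Qbc.image f4 ⊆ (Qbc.image ψ).image (fun p => msym p.2 / (p.1 * p.1)) := by
      intro x hx
      obtain ⟨q, hq, rfl⟩ := Finset.mem_image.1 hx
      refine Finset.mem_image.2 ⟨ψ q, Finset.mem_image_of_mem _ hq, ?_⟩
      obtain ⟨⟨a, b⟩, c, d⟩ := q
      rw [hQbc, Finset.mem_filter] at hq
      obtain ⟨_, _, _, hbc⟩ := hq
      simp only at hbc
      unfold f4
      simp only [hψ, msym_mk]
      rw [hbc]
    have hfib : 2 * (Qbc.image ψ).card ≤ Qbc.card := by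
      apply fiber_le
      intro p hp
      obtain ⟨q, hq, rfl⟩ := Finset.mem_image.1 hp
      obtain ⟨⟨a, b⟩, c, d⟩ := q
      have hq' := hq
      rw [hQbc, Finset.mem_filter] at hq'
      obtain ⟨hqP, hnpc, had, hbc⟩ := hq'
      simp only [hP, Finset.mem_product] at hqP
      obtain ⟨⟨ha, hb⟩, hc, hd⟩ := hqP
      simp only at had hbc
      unfold pc at hnpc; push_neg at hnpc
      obtain ⟨h1, h2, h3, h4⟩ := hnpc
      simp only at h1 h2 h3 h4
      have m1 : ((a, b), (c, d)) ∈ Qbc.filter (fun q' => ψ q' = ψ ((a, b), (c, d))) :=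
        Finset.mem_filter.2 ⟨hq, rfl⟩
      have m2 : ((d, b), (c, a)) ∈ Qbc.filter (fun q' => ψ q' = ψ ((a, b), (c, d))) := by
        refine Finset.mem_filter.2 ⟨Finset.mem_filter.2 ⟨by simp [hP, ha, hb, hc, hd], ?_, Ne.symm had, hbc⟩, ?_⟩
        · rintro (h | h | h | h)
          · exact h3 h
          · exact h4 h
          · exact h1 h
          · exact h2 h
        · simp only [hψ]
          rw [Prod.mk.injEq]
          exact ⟨rfl, Sym2.eq_swap⟩
      have hne : (((a, b), (c, d)) : Q4) ≠ ((d, b), (c, a)) :=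
        fun h => had (congrArg (fun z : Q4 => z.1.1) h)
      exact Finset.one_lt_card.2 ⟨_, m1, _, m2, hne⟩
    calc 2 * (Qbc.image f4).card
        ≤ 2 * ((Qbc.image ψ).image (fun p => msym p.2 / (p.1 * p.1))).card :=
          Nat.mul_le_mul_left 2 (Finset.card_le_card hsub)
      _ ≤ 2 * (Qbc.image ψ).card := Nat.mul_le_mul_left 2 Finset.card_image_le
      _ ≤ Qbc.card := hfib
      _ ≤ n * ((n - 1) * (n - 2)) := hQbccard
      _ = n * (n - 1) * (n - 2) := (mul_assoc _ _ _).symm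
  have hD : (Qd.image f4).card ≤ n * (n - 1) * (n - 2) * (n - 3) / 4 := by
    set ψ : Q4 → Sym2 ℂˣ × Sym2 ℂˣ := fun q => (s(q.1.1, q.2.2), s(q.1.2, q.2.1)) with hψ
    have hsub : Qd.image f4 ⊆ (Qd.image ψ).image (fun p => msym p.1 / msym p.2) := by
      intro x hx
      obtain ⟨q, hq, rfl⟩ := Finset.mem_image.1 hx
      refine Finset.mem_image.2 ⟨ψ q, Finset.mem_image_of_mem _ hq, ?_⟩
      obtain ⟨⟨a, b⟩, c, d⟩ := q
      unfold f4
      simp [hψ, msym_mk]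
    have hfib : 4 * (Qd.image ψ).card ≤ Qd.card := by
      apply fiber_le
      intro p hp
      obtain ⟨q, hq, rfl⟩ := Finset.mem_image.1 hp
      obtain ⟨⟨a, b⟩, c, d⟩ := q
      have hq' := hq
      rw [hQd, Finset.mem_filter] at hq'
      obtain ⟨hqP, hnpc, had, hbc⟩ := hq'
      simp only [hP, Finset.mem_product] at hqP
      obtain ⟨⟨ha, hb⟩, hc, hd⟩ := hqP
      simp only at had hbc
      unfold pc at hnpc; push_neg at hnpc
      obtain ⟨h1, h2, h3, h4⟩ := hnpc
      simp only at h1 h2 h3 h4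
      set F := Qd.filter (fun q' => ψ q' = ψ ((a, b), (c, d))) with hF
      have m1 : ((a, b), (c, d)) ∈ F := Finset.mem_filter.2 ⟨hq, rfl⟩
      have m2 : ((d, b), (c, a)) ∈ F := by
        refine Finset.mem_filter.2 ⟨Finset.mem_filter.2 ⟨by simp [hP, ha, hb, hc, hd], ?_, Ne.symm had, hbc⟩, ?_⟩
        · rintro (h | h | h | h)
          · exact h3 h
          · exact h4 h
          · exact h1 h
          · exact h2 h
        · simp only [hψ]
          rw [Prod.mk.injEq]
          exact ⟨Sym2.eq_swap, rfl⟩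
      have m3 : ((a, c), (b, d)) ∈ F := by
        refine Finset.mem_filter.2 ⟨Finset.mem_filter.2 ⟨by simp [hP, ha, hb, hc, hd], ?_, had, Ne.symm hbc⟩, ?_⟩
        · rintro (h | h | h | h)
          · exact h2 h
          · exact h1 h
          · exact h4 h
          · exact h3 h
        · simp only [hψ]
          rw [Prod.mk.injEq]
          exact ⟨rfl, Sym2.eq_swap⟩
      have m4 : ((d, c), (b, a)) ∈ F := by
        refine Finset.mem_filter.2 ⟨Finset.mem_filter.2 ⟨by simp [hP, ha, hb, hc, hd], ?_, Ne.symm had, Ne.symm hbc⟩, ?_⟩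
        · rintro (h | h | h | h)
          · exact h4 h
          · exact h3 h
          · exact h2 h
          · exact h1 h
        · simp only [hψ]
          rw [Prod.mk.injEq]
          exact ⟨Sym2.eq_swap, Sym2.eq_swap⟩
      have hsub4 : ({((a, b), (c, d)), ((d, b), (c, a)), ((a, c), (b, d)), ((d, c), (b, a))} :
          Finset Q4) ⊆ F := by
        simp only [Finset.insert_subset_iff, Finset.singleton_subset_iff]
        exact ⟨m1, m2, m3, m4⟩
      have c4 : ({((a, b), (c, d)), ((d, b), (c, a)), ((a, c), (b, d)), ((d, c), (b, a))} :
          Finset Q4).card = 4 := by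
        rw [Finset.card_insert_of_notMem (by
              simp only [Finset.mem_insert, Finset.mem_singleton, Prod.mk.injEq]; tauto),
            Finset.card_insert_of_notMem (by
              simp only [Finset.mem_insert, Finset.mem_singleton, Prod.mk.injEq]; tauto),
            Finset.card_insert_of_notMem (by
              simp only [Finset.mem_singleton, Prod.mk.injEq]; tauto),
            Finset.card_singleton]
      calc 4 = ({((a, b), (c, d)), ((d, b), (c, a)), ((a, c), (b, d)), ((d, c), (b, a))} :
          Finset Q4).card := c4.symm
        _ ≤ F.card := Finset.card_le_card hsub4
    have hstep : (Qd.image f4).card ≤ (Qd.image ψ).card :=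
      le_trans (Finset.card_le_card hsub) Finset.card_image_le
    rw [Nat.le_div_iff_mul_le (by norm_num : 0 < 4)]
    have hass : n * ((n - 1) * ((n - 2) * (n - 3))) = n * (n - 1) * (n - 2) * (n - 3) := by ring
    omega
  have hcov := Finset.card_le_card cover
  have h1 := Finset.card_union_le (Qc.image f4 ∪ Qs.image f4)
      (Qad.image f4 ∪ (Qbc.image f4 ∪ Qd.image f4))
  have h2 := Finset.card_union_le (Qad.image f4) (Qbc.image f4 ∪ Qd.image f4)
  have h3 := Finset.card_union_le (Qbc.image f4) (Qd.image f4)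
  omega
end

section
/- For every n ≥ 3 there exists a finite subset S ⊆ ℂ× with |S| = n such that |δ²S| = f(n); for instance, S = {e^{5^i} : i = 1, …, n} has this property. -/
open scoped Pointwise

/-!
With `P = {5^i : 1 ≤ i ≤ n}` we have `δ²S = exp ((P - P) - (P - P))`, and an element of
`(P - P) - (P - P)` is `∑_{i ∈ X} 5^i - ∑_{j ∈ Y} 5^j` for unordered pairs `X`, `Y` of exponents.
A sum of fewer than five powers of `5` determines its exponents (it is a base-`5` expansion), so two
such differences agree iff `X₁ + Y₂ = X₂ + Y₁` as multisets. Consequently pairs `(X, Y)` without a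
common exponent all give different values, while a pair sharing an exponent cancels it and gives
one of the `n(n-1) + 1` values `5^i - 5^j`. There are `n·C(n,2) + C(n,2)·C(n-1,2)` disjoint pairs,
and the total is `f(n)`.
-/

open Finset

lemma Nat.ofDigits_map_range (b : ℕ) (f : ℕ → ℕ) (M : ℕ) :
    Nat.ofDigits b ((List.range M).map f) = ∑ i ∈ range M, f i * b ^ i := by
  induction M with
  | zero => simp
  | succ M ih =>
    rw [List.range_succ, List.map_append, Nat.ofDigits_append, ih, List.length_map,
      List.length_range, List.map_singleton, Nat.ofDigits_singleton, sum_range_succ,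
      mul_comm (b ^ M)]

lemma Multiset.le_of_disjoint_of_le_add {α : Type*} {s t u : Multiset α} (hd : Disjoint s t)
    (h : s ≤ t + u) : s ≤ u := by
  classical
  refine Multiset.le_iff_count.2 fun a => ?_
  have hc := Multiset.count_add a t u ▸ Multiset.le_iff_count.1 h a
  by_cases ha : a ∈ s
  · rw [Multiset.count_eq_zero.2 (Multiset.disjoint_left.1 hd ha)] at hc
    omega
  · simp [Multiset.count_eq_zero.2 ha]

instance Multiset.decidableDisjoint {α : Type*} [DecidableEq α] (s t : Multiset α) :
    Decidable (Disjoint s t) :=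
  decidable_of_iff (∀ a ∈ s, a ∉ t) Multiset.disjoint_left.symm

lemma Sym2.toMultiset_injective {α : Type*} :
    Function.Injective (Sym2.toMultiset : Sym2 α → Multiset α) :=
  fun _ _ h => Sym2.ext fun x => by rw [← Sym2.mem_toMultiset, h, Sym2.mem_toMultiset]

def powSum (b : ℕ) (X : Multiset ℕ) : ℕ := (X.map (b ^ ·)).sum

def powDiff (b : ℕ) (X Y : Multiset ℕ) : ℤ := powSum b X - powSum b Y

section PowSum

variable {b : ℕ}

lemma powSum_add (X Y : Multiset ℕ) : powSum b (X + Y) = powSum b X + powSum b Y := by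
  simp [powSum]

lemma powSum_eq_sum_range {M : ℕ} {X : Multiset ℕ} (hX : ∀ i ∈ X, i < M) :
    powSum b X = ∑ i ∈ range M, X.count i * b ^ i := by
  rw [powSum, sum_multiset_map_count]
  simp_rw [smul_eq_mul]
  refine sum_subset (fun i hi => mem_range.2 (hX i (Multiset.mem_toFinset.1 hi))) fun i _ hi => ?_
  rw [Multiset.count_eq_zero.2 (mt Multiset.mem_toFinset.2 hi), zero_mul]

theorem eq_of_powSum_eq {X Y : Multiset ℕ} (hX : X.card < b) (hY : Y.card < b)
    (h : powSum b X = powSum b Y) : X = Y := by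
  rcases le_or_gt b 1 with hb | hb
  · rw [Multiset.card_eq_zero.1 (by omega : X.card = 0),
      Multiset.card_eq_zero.1 (by omega : Y.card = 0)]
  obtain ⟨M, hM⟩ : ∃ M, ∀ i ∈ X + Y, i < M :=
    ⟨(X + Y).sup + 1, fun i hi => Nat.lt_succ_of_le (Multiset.le_sup hi)⟩
  have digits_eq := Nat.ofDigits_inj_of_len_eq (L1 := (List.range M).map X.count)
    (L2 := (List.range M).map Y.count) hb (by simp)
    (by simpa using fun i _ => (Multiset.count_le_card i X).trans_lt hX)
    (by simpa using fun i _ => (Multiset.count_le_card i Y).trans_lt hY)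
    (by rwa [Nat.ofDigits_map_range, Nat.ofDigits_map_range, ← powSum_eq_sum_range,
      ← powSum_eq_sum_range] <;> intro i hi <;> exact hM i (by simp [hi]))
  ext i
  by_cases hi : i < M
  · simpa [hi] using congrArg (·[i]?) digits_eq
  · rw [Multiset.count_eq_zero.2 fun h => hi (hM i (by simp [h])),
      Multiset.count_eq_zero.2 fun h => hi (hM i (by simp [h]))]

theorem add_eq_add_of_powDiff_eq {X₁ Y₁ X₂ Y₂ : Multiset ℕ}
    (h₁ : (X₁ + Y₂).card < b) (h₂ : (X₂ + Y₁).card < b)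
    (h : powDiff b X₁ Y₁ = powDiff b X₂ Y₂) : X₁ + Y₂ = X₂ + Y₁ := by
  refine eq_of_powSum_eq h₁ h₂ ?_
  rw [powDiff, powDiff, sub_eq_sub_iff_add_eq_add] at h
  rw [powSum_add, powSum_add]
  exact_mod_cast h

theorem le_of_powDiff_eq_of_disjoint {X₁ Y₁ X₂ Y₂ : Multiset ℕ}
    (h₁ : (X₁ + Y₂).card < b) (h₂ : (X₂ + Y₁).card < b) (hd : Disjoint X₁ Y₁)
    (h : powDiff b X₁ Y₁ = powDiff b X₂ Y₂) : X₁ ≤ X₂ ∧ Y₁ ≤ Y₂ := by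
  have hXY := add_eq_add_of_powDiff_eq h₁ h₂ h
  refine ⟨Multiset.le_of_disjoint_of_le_add hd ?_,
    Multiset.le_of_disjoint_of_le_add hd.symm ?_⟩
  · rw [add_comm, ← hXY]
    exact Multiset.le_add_right _ _
  · rw [hXY]
    exact Multiset.le_add_left _ _

end PowSum

section DisjointPairs

variable {α : Type*} [DecidableEq α]

lemma filter_disjoint_toMultiset_sym2 (s : Finset α) (X : Sym2 α) :
    {Y ∈ s.sym2 | Disjoint X.toMultiset Y.toMultiset} = {a ∈ s | a ∉ X}.sym2 := by
  ext Y
  simp only [mem_filter, mem_sym2_iff, Multiset.disjoint_right, Sym2.mem_toMultiset]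
  grind

theorem card_disjoint_pairs_sym2 (s : Finset α) :
    #{p ∈ s.sym2 ×ˢ s.sym2 | Disjoint p.1.toMultiset p.2.toMultiset} =
      #s * (#s).choose 2 + (#s).choose 2 * (#s - 1).choose 2 := by
  have hsum : #{p ∈ s.sym2 ×ˢ s.sym2 | Disjoint p.1.toMultiset p.2.toMultiset} =
      ∑ X ∈ s.sym2, (#{a ∈ s | a ∉ X} + 1).choose 2 := by
    rw [card_filter, sum_product]
    refine sum_congr rfl fun X _ => ?_
    rw [← card_filter, filter_disjoint_toMultiset_sym2, card_sym2]
  rw [hsum, ← image_diag_union_image_offDiag, sum_union, sum_const_nat, sum_const_nat,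
    Sym2.card_image_diag, Sym2.card_image_offDiag]
  · rintro _ hX
    obtain ⟨⟨a, b⟩, hab, rfl⟩ := mem_image.1 hX
    obtain ⟨ha, hb, hab⟩ := mem_offDiag.1 hab
    have : {x ∈ s | x ∉ s(a, b)} = (s.erase a).erase b := by ext; simp; tauto
    rw [Function.uncurry_apply_pair, this, card_erase_of_mem (mem_erase.2 ⟨Ne.symm hab, hb⟩),
      card_erase_of_mem ha, Nat.sub_add_cancel]
    exact Nat.le_sub_of_add_le (one_lt_card.2 ⟨a, ha, b, hb, hab⟩)
  · rintro _ hX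
    obtain ⟨⟨a, a'⟩, ha, rfl⟩ := mem_image.1 hX
    obtain ⟨ha, rfl : a = a'⟩ := mem_diag.1 ha
    have : {x ∈ s | x ∉ s(a, a)} = s.erase a := by ext; simp [and_comm]
    rw [Function.uncurry_apply_pair, this, card_erase_of_mem ha,
      Nat.sub_add_cancel (card_pos.2 ⟨a, ha⟩)]
  · refine disjoint_left.2 fun _ hd ho => ?_
    obtain ⟨⟨a, a'⟩, ha, rfl⟩ := mem_image.1 hd
    obtain ⟨⟨c, d⟩, hcd, hcd'⟩ := mem_image.1 ho
    refine not_isDiag_mk_of_mem_offDiag hcd ?_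
    rw [show s(c, d) = s(a, a') from hcd']
    exact isDiag_mk_of_mem_diag ha

end DisjointPairs

section DifferenceSets

variable {b : ℕ} {s : Finset ℕ}

theorem card_image_powDiff_singleton (hb : 2 < b) (hs : s.Nonempty) :
    #((s ×ˢ s).image fun p => powDiff b {p.1} {p.2}) = #s * #s - #s + 1 := by
  have hdiag : s.diag.image (fun p => powDiff b {p.1} {p.2}) = {0} := by
    rw [image_congr (g := fun _ => 0) fun p hp => by simp [(mem_diag.1 hp).2, powDiff]]
    exact image_const (diag_nonempty.2 hs) 0
  have key : ∀ p ∈ s.offDiag, ∀ q : ℕ × ℕ, powDiff b {p.1} {p.2} = powDiff b {q.1} {q.2} →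
      p = q := by
    intro p hp q h
    obtain ⟨h₁, h₂⟩ := le_of_powDiff_eq_of_disjoint (by simpa using hb) (by simpa using hb)
      (by simpa [eq_comm] using (mem_offDiag.1 hp).2.2) h
    exact Prod.ext (by simpa using h₁) (by simpa using h₂)
  have hzero : 0 ∉ s.offDiag.image fun p => powDiff b {p.1} {p.2} := fun h => by
    obtain ⟨p, hp, h0⟩ := mem_image.1 h
    have := key p hp (p.1, p.1) (by simpa [powDiff] using h0)
    exact (mem_offDiag.1 hp).2.2 (by rw [this])
  rw [← diag_union_offDiag, image_union, hdiag,
    card_union_of_disjoint (disjoint_singleton_left.2 hzero), card_singleton,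
    card_image_of_injOn fun p hp q _ h => key p hp q h, offDiag_card, add_comm]

theorem image_powDiff_sym2_of_not_disjoint (hs : s.Nonempty) :
    {p ∈ s.sym2 ×ˢ s.sym2 | ¬Disjoint p.1.toMultiset p.2.toMultiset}.image
        (fun p => powDiff b p.1.toMultiset p.2.toMultiset) =
      (s ×ˢ s).image fun p => powDiff b {p.1} {p.2} := by
  ext x
  simp only [mem_image, mem_filter, mem_product, Prod.exists]
  constructor
  · rintro ⟨X, Y, ⟨⟨hX, hY⟩, hXY⟩, rfl⟩
    obtain ⟨a, haX, haY⟩ : ∃ a ∈ X, a ∈ Y := by simpa [Multiset.disjoint_left] using hXY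
    obtain ⟨i, rfl⟩ := Sym2.mem_iff_exists.1 haX
    obtain ⟨j, rfl⟩ := Sym2.mem_iff_exists.1 haY
    rw [mk_mem_sym2_iff] at hX hY
    exact ⟨i, j, ⟨hX.2, hY.2⟩, by simp [powDiff, powSum, Sym2.toMultiset]⟩
  · rintro ⟨i, j, ⟨hi, hj⟩, rfl⟩
    obtain ⟨a, ha⟩ := hs
    refine ⟨s(a, i), s(a, j), ⟨⟨mk_mem_sym2_iff.2 ⟨ha, hi⟩, mk_mem_sym2_iff.2 ⟨ha, hj⟩⟩, ?_⟩, ?_⟩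
    · simp [Multiset.disjoint_left, Sym2.toMultiset]
    · simp [powDiff, powSum, Sym2.toMultiset]

theorem card_image_powDiff_sym2 (hb : 4 < b) (hs : s.Nonempty) :
    #((s.sym2 ×ˢ s.sym2).image fun p => powDiff b p.1.toMultiset p.2.toMultiset) =
      #{p ∈ s.sym2 ×ˢ s.sym2 | Disjoint p.1.toMultiset p.2.toMultiset} +
        #((s ×ˢ s).image fun p => powDiff b {p.1} {p.2}) := by
  have key {p : Sym2 ℕ × Sym2 ℕ} (hp : Disjoint p.1.toMultiset p.2.toMultiset)
      {X Y : Multiset ℕ} (hX : X.card ≤ 2) (hY : Y.card ≤ 2)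
      (h : powDiff b p.1.toMultiset p.2.toMultiset = powDiff b X Y) :
      p.1.toMultiset ≤ X ∧ p.2.toMultiset ≤ Y :=
    le_of_powDiff_eq_of_disjoint (by simp [Sym2.card_toMultiset]; omega)
      (by simp [Sym2.card_toMultiset]; omega) hp h
  conv_lhs => rw [← filter_union_filter_not_eq
    (fun p : Sym2 ℕ × Sym2 ℕ => Disjoint p.1.toMultiset p.2.toMultiset) (s.sym2 ×ˢ s.sym2)]
  rw [image_union, image_powDiff_sym2_of_not_disjoint hs, card_union_of_disjoint,
    card_image_of_injOn]
  · intro p hp q _ h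
    have eq_of_le {z z' : Sym2 ℕ} (hz : z.toMultiset ≤ z'.toMultiset) : z = z' :=
      Sym2.toMultiset_injective <| Multiset.eq_of_le_of_card_le hz (by simp [Sym2.card_toMultiset])
    obtain ⟨h₁, h₂⟩ := key (mem_filter.1 hp).2 (by simp [Sym2.card_toMultiset])
      (by simp [Sym2.card_toMultiset]) h
    exact Prod.ext (eq_of_le h₁) (eq_of_le h₂)
  · refine disjoint_left.2 fun x hx hx' => ?_
    obtain ⟨p, hp, rfl⟩ := mem_image.1 hx
    obtain ⟨q, -, hq⟩ := mem_image.1 hx'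
    have := Multiset.card_le_card (key (mem_filter.1 hp).2 (by simp) (by simp) hq.symm).1
    simp [Sym2.card_toMultiset] at this

theorem sub_sub_sub_image_pow (b : ℕ) (s : Finset ℕ) :
    let A := s.image fun i => (b : ℤ) ^ i
    (A - A) - (A - A) =
      (s.sym2 ×ˢ s.sym2).image fun p => powDiff b p.1.toMultiset p.2.toMultiset := by
  ext x
  simp only [mem_sub, mem_image, mem_product, Prod.exists]
  constructor
  · rintro ⟨_, ⟨_, ⟨i, hi, rfl⟩, _, ⟨j, hj, rfl⟩, rfl⟩, _, ⟨_, ⟨k, hk, rfl⟩, _, ⟨l, hl, rfl⟩, rfl⟩,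
      rfl⟩
    refine ⟨s(i, l), s(j, k), ⟨mk_mem_sym2_iff.2 ⟨hi, hl⟩, mk_mem_sym2_iff.2 ⟨hj, hk⟩⟩, ?_⟩
    simp [powDiff, powSum, Sym2.toMultiset]
    ring
  · rintro ⟨X, Y, ⟨hX, hY⟩, rfl⟩
    induction X using Sym2.ind with | h i l => ?_
    induction Y using Sym2.ind with | h j k => ?_
    rw [mk_mem_sym2_iff] at hX hY
    refine ⟨_, ⟨_, ⟨i, hX.1, rfl⟩, _, ⟨j, hY.1, rfl⟩, rfl⟩,
      _, ⟨_, ⟨k, hY.2, rfl⟩, _, ⟨l, hX.2, rfl⟩, rfl⟩, ?_⟩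
    simp [powDiff, powSum, Sym2.toMultiset]
    ring

end DifferenceSets

lemma two_mul_choose_two (k : ℕ) : 2 * k.choose 2 = k * (k - 1) := by
  rw [Nat.choose_two_right, Nat.mul_div_cancel' (Nat.even_mul_pred_self k).two_dvd]

theorem fBound_eq {n : ℕ} (hn : 3 ≤ n) :
    fBound n = n * n.choose 2 + n.choose 2 * (n - 1).choose 2 + (n * n - n + 1) := by
  obtain ⟨m, rfl⟩ := Nat.exists_eq_add_of_le' hn
  have hc := two_mul_choose_two (m + 3)
  have hd := two_mul_choose_two (m + 2)
  have he := two_mul_choose_two (m + 1)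
  simp only [fBound, Nat.add_sub_cancel, show m + 3 - 1 = m + 2 by omega,
    show m + 3 - 2 = m + 1 by omega, show m + 2 - 1 = m + 1 by omega] at hc hd he ⊢
  rw [show (m + 3) * (m + 2) * (m + 1) * m = 4 * ((m + 3).choose 2 * (m + 1).choose 2) by
      nlinarith, Nat.mul_div_cancel_left _ (by norm_num),
    show (m + 3) * (m + 3) - (m + 3) = (m + 3) * (m + 2) by
      rw [Nat.sub_eq_iff_eq_add (Nat.le_mul_of_pos_right _ (by omega))]; ring]
  nlinarith

lemma Finset.image_sub_eq_div_image {α β : Type*} [DecidableEq α] [DecidableEq β] [Sub α]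
    [Div β] {E : α → β} (hE : ∀ m k, E (m - k) = E m / E k) (A B : Finset α) :
    (A - B).image E = A.image E / B.image E :=
  image_image₂_distrib hE

noncomputable def intExpUnit (m : ℤ) : ℂˣ := Units.mk0 (Complex.exp m) (Complex.exp_ne_zero _)

@[simp] lemma coe_intExpUnit (m : ℤ) : (intExpUnit m : ℂ) = Complex.exp m := rfl

lemma intExpUnit_sub (m k : ℤ) : intExpUnit (m - k) = intExpUnit m / intExpUnit k :=
  Units.ext <| by simp [Complex.exp_sub]

lemma intExpUnit_injective : Function.Injective intExpUnit := fun m k h => by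
  have h' : (Real.exp m : ℂ) = Real.exp k := by
    push_cast
    simpa [Units.ext_iff] using h
  exact_mod_cast Real.exp_injective (Complex.ofReal_injective h')

/-- For every `n ≥ 3` there is a finite subset `S ⊆ ℂˣ` with `|S| = n`
and `|δ²S| = f(n)`; for instance `S = {e^{5^i} : i = 1, …, n}` works. -/
theorem exists_delta_sq_eq (n : ℕ) (hn : 3 ≤ n) :
    ∃ S : Finset ℂˣ,
      (∀ u : ℂˣ, u ∈ S ↔ ∃ i : ℕ, 1 ≤ i ∧ i ≤ n ∧ (u : ℂ) = Complex.exp ((5 : ℂ) ^ i)) ∧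
      S.card = n ∧ (((S / S) / (S / S)) : Finset ℂˣ).card = fBound n := by
  set A : Finset ℤ := (Icc 1 n).image fun i => (5 : ℤ) ^ i
  have hI : (Icc 1 n).Nonempty := nonempty_Icc.2 (by omega)
  refine ⟨A.image intExpUnit, fun u => ?_, ?_, ?_⟩
  · simp [A, Units.ext_iff, eq_comm, and_assoc]
  · rw [card_image_of_injective _ intExpUnit_injective,
      card_image_of_injective _ (pow_right_injective₀ (by norm_num) (by norm_num)),
      Nat.card_Icc, Nat.add_sub_cancel]
  · rw [← image_sub_eq_div_image intExpUnit_sub, ← image_sub_eq_div_image intExpUnit_sub,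
      card_image_of_injective _ intExpUnit_injective,
      show A - A - (A - A) = _ from sub_sub_sub_image_pow 5 (Icc 1 n),
      card_image_powDiff_sym2 (by norm_num) hI, card_disjoint_pairs_sym2,
      card_image_powDiff_singleton (by norm_num) hI, Nat.card_Icc, Nat.add_sub_cancel,
      fBound_eq hn]
end

section
/- Let n ≥ 3 and let S be a finite subset of ℂ× with |S| ≤ n. If |δ²S| = f(n), then |S| = n. -/
open scoped Pointwise
open Finset

-- card of S*S at most triangular
lemma card_mul_self_le' (S : Finset ℂˣ) : (S * S).card ≤ S.card * (S.card + 1) / 2 := by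
  have hsub : (S * S) ⊆ S.sym2.image (Sym2.lift ⟨fun a b => a * b, fun a b => mul_comm a b⟩) := by
    intro x hx
    rw [Finset.mem_mul] at hx
    obtain ⟨a, ha, b, hb, rfl⟩ := hx
    exact Finset.mem_image.2 ⟨s(a, b), Finset.mk_mem_sym2_iff.2 ⟨ha, hb⟩, rfl⟩
  calc (S * S).card ≤ S.sym2.card := (Finset.card_le_card hsub).trans Finset.card_image_le
    _ = S.card * (S.card + 1) / 2 := by
        rw [Finset.card_sym2, Nat.choose_two_right, Nat.add_sub_cancel, mul_comm]

lemma dds_subset (S : Finset ℂˣ) : ((S / S) / (S / S)) ⊆ (S * S) / (S * S) := by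
  intro x hx
  rw [Finset.mem_div] at hx
  obtain ⟨p, hp, q, hq, rfl⟩ := hx
  rw [Finset.mem_div] at hp hq
  obtain ⟨a, ha, b, hb, rfl⟩ := hp
  obtain ⟨c, hc, d, hd, rfl⟩ := hq
  rw [Finset.mem_div]
  refine ⟨a * d, Finset.mul_mem_mul ha hd, b * c, Finset.mul_mem_mul hb hc, ?_⟩
  simp [div_eq_mul_inv, mul_inv, mul_comm, mul_left_comm, mul_assoc]

lemma arith (n : ℕ) (hn : 3 ≤ n) : ((n - 1) * n / 2) ^ 2 < fBound n := by
  obtain ⟨k, rfl⟩ := Nat.exists_eq_add_of_le hn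
  have e2 : 3 + k = k + 3 := by omega
  have e1 : k + 3 - 1 = k + 2 := by omega
  have e3 : k + 3 - 2 = k + 1 := by omega
  have e4 : k + 3 - 3 = k := by omega
  obtain ⟨a, hA⟩ : ∃ a, (k + 2) * (k + 3) = 2 * a := by
    obtain ⟨m, hm⟩ := Nat.even_mul_succ_self (k + 2)
    exact ⟨m, by rw [show (k + 2) * (k + 3) = (k + 2) * ((k + 2) + 1) by ring, hm]; ring⟩
  obtain ⟨c, hC⟩ : ∃ c, k * (k + 1) = 2 * c := by
    obtain ⟨m, hm⟩ := Nat.even_mul_succ_self k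
    exact ⟨m, by rw [hm]; ring⟩
  have hQ : (k + 3) * ((k + 2) * ((k + 1) * k)) = 4 * (a * c) := by
    have : (k + 3) * ((k + 2) * ((k + 1) * k)) = ((k + 2) * (k + 3)) * (k * (k + 1)) := by ring
    rw [this, hA, hC]; ring
  unfold fBound
  rw [e2, e1, e3, e4, hA, mul_assoc, mul_assoc, hQ]
  rw [Nat.mul_div_cancel_left a (by norm_num : 0 < 2),
      Nat.mul_div_cancel_left (a * c) (by norm_num : 0 < 4)]
  zify at hA hC ⊢
  have hac2 : 2 * (a : ℤ) = 2 * c + 4 * k + 6 := by linear_combination hC - hA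
  have hac : (a : ℤ) = (c : ℤ) + 2 * k + 3 := by linarith
  nlinarith [hA, hC, hac, sq_nonneg ((k : ℤ)), Int.natCast_nonneg k, Int.natCast_nonneg a, Int.natCast_nonneg c]

/-- For `n ≥ 3` and a finite subset `S ⊆ ℂˣ` with `|S| ≤ n`,
if `|δ²S| = f(n)` then `|S| = n`. -/
theorem card_eq_of_delta_sq_eq (n : ℕ) (hn : 3 ≤ n) (S : Finset ℂˣ) (hS : S.card ≤ n)
    (h : (((S / S) / (S / S)) : Finset ℂˣ).card = fBound n) : S.card = n := by
  by_contra hne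
  have hm : S.card ≤ n - 1 := by omega
  have hdiv : (((S / S) / (S / S)) : Finset ℂˣ).card ≤ (S * S).card * (S * S).card := by
    calc (((S / S) / (S / S)) : Finset ℂˣ).card ≤ ((S * S) / (S * S)).card :=
          Finset.card_le_card (dds_subset S)
      _ = ((S * S) * (S * S)⁻¹).card := by rw [div_eq_mul_inv]
      _ ≤ (S * S).card * (S * S)⁻¹.card := Finset.card_mul_le
      _ = (S * S).card * (S * S).card := by rw [Finset.card_inv]
  have hT : (S * S).card ≤ (n - 1) * n / 2 := by
    refine (card_mul_self_le' S).trans ?_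
    apply Nat.div_le_div_right
    have : S.card + 1 ≤ n := by omega
    exact Nat.mul_le_mul hm this
  have : fBound n ≤ ((n - 1) * n / 2) ^ 2 := by
    rw [← h] at *
    calc _ ≤ (S*S).card * (S*S).card := hdiv
      _ ≤ ((n-1)*n/2) * ((n-1)*n/2) := Nat.mul_le_mul hT hT
      _ = _ := (sq _).symm
  exact absurd this (Nat.not_le.2 (arith n hn))
end

section
/- For every n ≥ 3 there exists a nonzero polynomial p in n variables over ℂ such that for every tuple t = (t₁, …, tₙ) ∈ (ℂ×)ⁿ with p(t) ≠ 0, the set S = {t₁, …, tₙ} satisfies |δ²S| = f(n). (Equivalently, the set of very regular elements T^{vr} = {t ∈ (ℂ×)ⁿ : |δ²{t₁,…,tₙ}| = f(n)} contains a nonempty Zariski open subset of the torus, and in particular is Zariski dense.) -/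
/-!
Every element of `δ²S` for `S = {t₁, …, tₙ}` is a Laurent monomial `t ^ v` with exponent
`v = e a - e b - (e c - e d)`. For any finite set `V` of exponents, `v ↦ t ^ v` is injective on `V`
unless `t` is a zero of the nonzero polynomial `∏ (X ^ u⁺ - X ^ u⁻)` over `0 ≠ u ∈ V - V`. So for
generic `t`, `|δ²S|` is the number of distinct exponents `e a - e b - (e c - e d)`. These are `0`
and the vectors `α • 1_s - β • 1_s'` with `s, s'` disjoint and `(α, β, #s, #s')` one of five
patterns, the pattern with `(#s, #s') = (p, q)` occurring `C(n, p) C(n - p, q)` times; the total is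
`f(n)`.
-/

open scoped Pointwise

open Finset MvPolynomial

section LaurentMonomial

variable {σ M : Type*} [Fintype σ] [CommGroup M]

def laurentMonomial (t : σ → M) (v : σ → ℤ) : M := ∏ i, t i ^ v i

lemma laurentMonomial_sub (t : σ → M) (v w : σ → ℤ) :
    laurentMonomial t (v - w) = laurentMonomial t v / laurentMonomial t w := by
  rw [laurentMonomial, laurentMonomial, laurentMonomial, ← prod_div_distrib]
  simp only [Pi.sub_apply, zpow_sub, div_eq_mul_inv]

lemma laurentMonomial_single [DecidableEq σ] (t : σ → M) (x : σ) :
    laurentMonomial t (Pi.single x 1) = t x := by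
  rw [laurentMonomial, prod_eq_single x (fun i _ hi => by simp [hi]) (by simp)]
  simp

lemma laurentMonomial_mul_prod_toNat_neg (t : σ → M) (v : σ → ℤ) :
    laurentMonomial t v * ∏ i, t i ^ (-v i).toNat = ∏ i, t i ^ (v i).toNat := by
  rw [laurentMonomial, ← prod_mul_distrib]
  refine prod_congr rfl fun i _ => ?_
  rw [← zpow_natCast, ← zpow_natCast, ← zpow_add, ← Int.toNat_sub_toNat_neg (v i)]
  congr 1
  omega

end LaurentMonomial

section Separation

variable {σ R : Type*} [Fintype σ] [CommRing R]

noncomputable def toNatPart (v : σ → ℤ) : σ →₀ ℕ :=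
  Finsupp.equivFunOnFinite.symm fun i => (v i).toNat

@[simp]
lemma toNatPart_apply (v : σ → ℤ) (i : σ) : toNatPart v i = (v i).toNat := rfl

noncomputable def laurentBinomial (v : σ → ℤ) : MvPolynomial σ R :=
  monomial (toNatPart v) 1 - monomial (toNatPart (-v)) 1

lemma laurentBinomial_ne_zero [Nontrivial R] {v : σ → ℤ} (hv : v ≠ 0) :
    laurentBinomial (R := R) v ≠ 0 := by
  rw [laurentBinomial, sub_ne_zero]
  intro h
  refine hv (funext fun i => ?_)
  have hi := DFunLike.congr_fun (monomial_left_injective one_ne_zero h) i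
  simp only [toNatPart_apply, Pi.neg_apply] at hi
  have := Int.toNat_sub_toNat_neg (v i)
  simp only [Pi.zero_apply]
  omega

lemma eval_laurentBinomial_eq_zero {t : σ → Rˣ} {v : σ → ℤ} (hv : laurentMonomial t v = 1) :
    eval (fun i => (t i : R)) (laurentBinomial v) = 0 := by
  have key := laurentMonomial_mul_prod_toNat_neg t v
  rw [hv, one_mul] at key
  simp only [laurentBinomial, map_sub, eval_monomial, one_mul, sub_eq_zero]
  rw [Finsupp.prod_fintype _ _ fun _ => pow_zero _, Finsupp.prod_fintype _ _ fun _ => pow_zero _]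
  simp only [toNatPart_apply, Pi.neg_apply]
  exact_mod_cast congrArg Units.val key.symm

theorem exists_ne_zero_injOn_laurentMonomial [IsDomain R] (V : Finset (σ → ℤ)) :
    ∃ p : MvPolynomial σ R, p ≠ 0 ∧ ∀ t : σ → Rˣ,
      eval (fun i => (t i : R)) p ≠ 0 → Set.InjOn (laurentMonomial t) V := by
  refine ⟨∏ u ∈ (V - V).erase 0, laurentBinomial u,
    prod_ne_zero_iff.mpr fun u hu => laurentBinomial_ne_zero (ne_of_mem_erase hu), ?_⟩
  intro t hp v hv w hw hvw
  by_contra hne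
  rw [map_prod] at hp
  refine hp (prod_eq_zero (i := v - w) ?_ ?_)
  · exact mem_erase.mpr ⟨sub_ne_zero.mpr hne, sub_mem_sub hv hw⟩
  · exact eval_laurentBinomial_eq_zero (by rw [laurentMonomial_sub, hvw, div_self'])

end Separation

section DisjointPairs

variable {ι : Type*} [Fintype ι] [DecidableEq ι]

lemma card_filter_disjoint_card_eq (p q : ℕ) :
    #{st : Finset ι × Finset ι | Disjoint st.1 st.2 ∧ #st.1 = p ∧ #st.2 = q} =
      (Fintype.card ι).choose p * (Fintype.card ι - p).choose q := by
  have fiber (s : Finset ι) (hs : #s = p) :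
      #{s' : Finset ι | Disjoint s s' ∧ #s' = q} = (Fintype.card ι - p).choose q := by
    rw [← hs, ← card_compl, ← card_powersetCard]
    congr 1
    ext s'
    simp [mem_powersetCard, subset_compl_iff_disjoint_left]
  have inner (s : Finset ι) : ∑ s' : Finset ι,
      (if Disjoint s s' ∧ #s = p ∧ #s' = q then 1 else 0) =
        if #s = p then (Fintype.card ι - p).choose q else 0 := by
    split_ifs with hs
    · simp only [hs, true_and, ← fiber s hs, card_filter]
    · simp [hs]
  rw [card_filter, ← univ_product_univ, sum_product]
  simp only [inner]
  rw [← sum_filter, sum_const, smul_eq_mul, ← powerset_univ, ← powersetCard_eq_filter,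
    card_powersetCard, card_univ]

end DisjointPairs

section DoubleRatioExponents

variable {ι : Type*} [DecidableEq ι]

def ratioExponent (a b : ι) : ι → ℤ := Pi.single a 1 - Pi.single b 1

def doubleRatioExponent (q : ι × ι × ι × ι) : ι → ℤ :=
  ratioExponent q.1 q.2.1 - ratioExponent q.2.2.1 q.2.2.2

lemma doubleRatioExponent_eq_iff {a b c d : ι} {v : ι → ℤ} :
    doubleRatioExponent (a, b, c, d) = v ↔ ∀ i, ((if i = a then 1 else 0) -
      (if i = b then 1 else 0)) - ((if i = c then 1 else 0) - (if i = d then 1 else 0)) = v i := by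
  simp [funext_iff, doubleRatioExponent, ratioExponent, Pi.single_apply]

lemma laurentMonomial_doubleRatioExponent [Fintype ι] {G : Type*} [CommGroup G] (t : ι → G)
    (q : ι × ι × ι × ι) :
    laurentMonomial t (doubleRatioExponent q) = t q.1 / t q.2.1 / (t q.2.2.1 / t q.2.2.2) := by
  simp only [doubleRatioExponent, ratioExponent, laurentMonomial_sub, laurentMonomial_single]

variable (ι) in
def doubleRatioExponents [Fintype ι] : Finset (ι → ℤ) := univ.image doubleRatioExponent

lemma image_div_div_eq_image_laurentMonomial [Fintype ι] {G : Type*} [CommGroup G]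
    [DecidableEq G] (t : ι → G) :
    univ.image t / univ.image t / (univ.image t / univ.image t) =
      (doubleRatioExponents ι).image (laurentMonomial t) := by
  rw [doubleRatioExponents, image_image]
  ext g
  simp only [mem_div, mem_image, mem_univ, true_and, Function.comp_apply,
    laurentMonomial_doubleRatioExponent, Prod.exists]
  constructor
  · rintro ⟨_, ⟨_, ⟨a, rfl⟩, _, ⟨b, rfl⟩, rfl⟩, _, ⟨_, ⟨c, rfl⟩, _, ⟨d, rfl⟩, rfl⟩,
      rfl⟩
    exact ⟨a, b, c, d, rfl⟩
  · rintro ⟨a, b, c, d, rfl⟩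
    exact ⟨_, ⟨_, ⟨a, rfl⟩, _, ⟨b, rfl⟩, rfl⟩, _, ⟨_, ⟨c, rfl⟩, _, ⟨d, rfl⟩, rfl⟩,
      rfl⟩

end DoubleRatioExponents

section Shapes

variable {ι : Type*} [DecidableEq ι]

def shapeVec (α β : ℤ) (s s' : Finset ι) : ι → ℤ :=
  fun i => if i ∈ s then α else if i ∈ s' then -β else 0

/-- A nonzero `e a - e b - (e c - e d)` is `shapeVec α β s s'` for disjoint `s, s'` with
`(α, β, #s, #s')` in this list: after cancellation, `{a, d}` and `{b, c}` are disjoint multisets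
of the same size `1` or `2`. -/
def shapes : Finset (ℤ × ℤ × ℕ × ℕ) :=
  {(1, 1, 1, 1), (2, 2, 1, 1), (2, 1, 1, 2), (1, 2, 2, 1), (1, 1, 2, 2)}

lemma pos_of_mem_shapes {α β : ℤ} {p q : ℕ} (h : (α, β, p, q) ∈ shapes) :
    0 < α ∧ 0 < β ∧ 0 < p ∧ 0 < q := by
  simp only [shapes, mem_insert, mem_singleton, Prod.mk.injEq] at h
  omega

lemma shapeVec_pos_iff {α β : ℤ} (hα : 0 < α) (hβ : 0 < β) {s s' : Finset ι}
    (hd : Disjoint s s') (i : ι) : 0 < shapeVec α β s s' i ↔ i ∈ s := by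
  have : i ∈ s → i ∉ s' := fun hi => disjoint_left.mp hd hi
  unfold shapeVec
  split_ifs <;> simp_all [hβ.le]

lemma shapeVec_neg_iff {α β : ℤ} (hα : 0 < α) (hβ : 0 < β) {s s' : Finset ι}
    (hd : Disjoint s s') (i : ι) : shapeVec α β s s' i < 0 ↔ i ∈ s' := by
  have : i ∈ s → i ∉ s' := fun hi => disjoint_left.mp hd hi
  unfold shapeVec
  split_ifs <;> simp_all [hα.le]

variable (ι) [Fintype ι]

def shapeData : Finset ((ℤ × ℤ × ℕ × ℕ) × Finset ι × Finset ι) :=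
  {x ∈ shapes ×ˢ univ | Disjoint x.2.1 x.2.2 ∧ #x.2.1 = x.1.2.2.1 ∧ #x.2.2 = x.1.2.2.2}

def shapeVecs : Finset (ι → ℤ) :=
  insert 0 ((shapeData ι).image fun x => shapeVec x.1.1 x.1.2.1 x.2.1 x.2.2)

variable {ι}

lemma shapeVec_mem_shapeVecs {α β : ℤ} {s s' : Finset ι} (h : (α, β, #s, #s') ∈ shapes)
    (hd : Disjoint s s') : shapeVec α β s s' ∈ shapeVecs ι :=
  mem_insert_of_mem <|
    mem_image.mpr ⟨((α, β, #s, #s'), s, s'), by simp [shapeData, h, hd], rfl⟩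

lemma ratioExponent_mem_shapeVecs (x y : ι) : ratioExponent x y ∈ shapeVecs ι := by
  by_cases hxy : x = y
  · simp [shapeVecs, ratioExponent, hxy]
  convert shapeVec_mem_shapeVecs (α := 1) (β := 1) (s := {x}) (s' := {y}) (by simp [shapes])
    (disjoint_singleton.mpr hxy) using 1
  ext i
  simp only [ratioExponent, shapeVec, Pi.sub_apply, Pi.single_apply, mem_singleton]
  split_ifs <;> simp_all

lemma doubleRatioExponent_mem_shapeVecs (q : ι × ι × ι × ι) :
    doubleRatioExponent q ∈ shapeVecs ι := by
  obtain ⟨a, b, c, d⟩ := q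
  by_cases hab : a = b
  · rw [doubleRatioExponent_eq_iff (v := ratioExponent d c) |>.mpr fun i => by
      simp only [ratioExponent, Pi.sub_apply, Pi.single_apply]; split_ifs <;> simp_all]
    exact ratioExponent_mem_shapeVecs d c
  by_cases hac : a = c
  · rw [doubleRatioExponent_eq_iff (v := ratioExponent d b) |>.mpr fun i => by
      simp only [ratioExponent, Pi.sub_apply, Pi.single_apply]; split_ifs <;> simp_all]
    exact ratioExponent_mem_shapeVecs d b
  by_cases hdb : d = b
  · rw [doubleRatioExponent_eq_iff (v := ratioExponent a c) |>.mpr fun i => by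
      simp only [ratioExponent, Pi.sub_apply, Pi.single_apply]; split_ifs <;> simp_all]
    exact ratioExponent_mem_shapeVecs a c
  by_cases hdc : d = c
  · rw [doubleRatioExponent_eq_iff (v := ratioExponent a b) |>.mpr fun i => by
      simp only [ratioExponent, Pi.sub_apply, Pi.single_apply]; split_ifs <;> simp_all]
    exact ratioExponent_mem_shapeVecs a b
  by_cases had : a = d <;> by_cases hbc : b = c
  · rw [doubleRatioExponent_eq_iff (v := shapeVec 2 2 {a} {b}) |>.mpr fun i => by
      simp only [shapeVec, mem_singleton]; split_ifs <;> subst_vars <;> simp_all]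
    exact shapeVec_mem_shapeVecs (by simp [shapes]) (by simpa)
  · rw [doubleRatioExponent_eq_iff (v := shapeVec 2 1 {a} {b, c}) |>.mpr fun i => by
      simp only [shapeVec, mem_singleton, mem_insert]; split_ifs <;> subst_vars <;> simp_all]
    exact shapeVec_mem_shapeVecs (by simp [shapes, card_pair hbc]) (by simp [hab, hac])
  · rw [doubleRatioExponent_eq_iff (v := shapeVec 1 2 {a, d} {b}) |>.mpr fun i => by
      simp only [shapeVec, mem_singleton, mem_insert]; split_ifs <;> subst_vars <;> simp_all]
    exact shapeVec_mem_shapeVecs (by simp [shapes, card_pair had])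
      (by simp [Ne.symm hab, Ne.symm hdb])
  · rw [doubleRatioExponent_eq_iff (v := shapeVec 1 1 {a, d} {b, c}) |>.mpr fun i => by
      simp only [shapeVec, mem_singleton, mem_insert]; split_ifs <;> subst_vars <;> simp_all]
    exact shapeVec_mem_shapeVecs (by simp [shapes, card_pair had, card_pair hbc])
      (by simp [Ne.symm hab, Ne.symm hac, Ne.symm hdb, Ne.symm hdc])

lemma shapeVec_mem_doubleRatioExponents {α β : ℤ} {s s' : Finset ι}
    (h : (α, β, #s, #s') ∈ shapes) (hd : Disjoint s s') :
    shapeVec α β s s' ∈ doubleRatioExponents ι := by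
  simp only [doubleRatioExponents, mem_image, mem_univ, true_and, Prod.exists]
  simp only [shapes, mem_insert, mem_singleton, Prod.mk.injEq] at h
  rcases h with ⟨rfl, rfl, hs, hs'⟩ | ⟨rfl, rfl, hs, hs'⟩ | ⟨rfl, rfl, hs, hs'⟩ |
    ⟨rfl, rfl, hs, hs'⟩ | ⟨rfl, rfl, hs, hs'⟩
  · obtain ⟨x, rfl⟩ := card_eq_one.mp hs
    obtain ⟨y, rfl⟩ := card_eq_one.mp hs'
    refine ⟨x, y, x, x, doubleRatioExponent_eq_iff.mpr fun i => ?_⟩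
    simp only [shapeVec, mem_singleton]; split_ifs <;> subst_vars <;> simp_all
  · obtain ⟨x, rfl⟩ := card_eq_one.mp hs
    obtain ⟨y, rfl⟩ := card_eq_one.mp hs'
    refine ⟨x, y, y, x, doubleRatioExponent_eq_iff.mpr fun i => ?_⟩
    simp only [shapeVec, mem_singleton]; split_ifs <;> subst_vars <;> simp_all
  · obtain ⟨x, rfl⟩ := card_eq_one.mp hs
    obtain ⟨y, z, -, rfl⟩ := card_eq_two.mp hs'
    refine ⟨x, y, z, x, doubleRatioExponent_eq_iff.mpr fun i => ?_⟩
    simp only [shapeVec, mem_singleton, mem_insert]; split_ifs <;> subst_vars <;> simp_all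
  · obtain ⟨x, y, -, rfl⟩ := card_eq_two.mp hs
    obtain ⟨z, rfl⟩ := card_eq_one.mp hs'
    refine ⟨x, z, z, y, doubleRatioExponent_eq_iff.mpr fun i => ?_⟩
    simp only [shapeVec, mem_singleton, mem_insert]; split_ifs <;> subst_vars <;> simp_all
  · obtain ⟨x, y, -, rfl⟩ := card_eq_two.mp hs
    obtain ⟨z, w, -, rfl⟩ := card_eq_two.mp hs'
    refine ⟨x, z, w, y, doubleRatioExponent_eq_iff.mpr fun i => ?_⟩
    simp only [shapeVec, mem_singleton, mem_insert]; split_ifs <;> subst_vars <;> simp_all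

lemma doubleRatioExponents_eq_shapeVecs [Nonempty ι] : doubleRatioExponents ι = shapeVecs ι := by
  refine Subset.antisymm (fun v hv => ?_) (fun v hv => ?_)
  · obtain ⟨q, -, rfl⟩ := mem_image.mp hv
    exact doubleRatioExponent_mem_shapeVecs q
  · rcases mem_insert.mp hv with rfl | hv
    · obtain ⟨x⟩ := ‹Nonempty ι›
      exact mem_image.mpr
        ⟨(x, x, x, x), mem_univ _, by simp [doubleRatioExponent, ratioExponent]⟩
    · obtain ⟨⟨⟨α, β, p, q⟩, s, s'⟩, hx, rfl⟩ := mem_image.mp hv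
      obtain ⟨hσ, hd, rfl, rfl⟩ := by simpa [shapeData] using hx
      exact shapeVec_mem_doubleRatioExponents hσ hd

lemma shapeVec_injOn :
    Set.InjOn (fun x : (ℤ × ℤ × ℕ × ℕ) × Finset ι × Finset ι =>
      shapeVec x.1.1 x.1.2.1 x.2.1 x.2.2) (shapeData ι) := by
  rintro ⟨⟨α, β, p, q⟩, s, s'⟩ hx ⟨⟨α', β', p', q'⟩, t, t'⟩ hy h
  dsimp only at h
  obtain ⟨hσ, hd, rfl, rfl⟩ := by simpa [shapeData] using hx
  obtain ⟨hσ', hd', rfl, rfl⟩ := by simpa [shapeData] using hy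
  obtain ⟨hα, hβ, hs, hs'⟩ := pos_of_mem_shapes hσ
  obtain ⟨hα', hβ', -, -⟩ := pos_of_mem_shapes hσ'
  have hst : s = t := by
    ext i; rw [← shapeVec_pos_iff hα hβ hd, ← shapeVec_pos_iff hα' hβ' hd', h]
  have hst' : s' = t' := by
    ext i; rw [← shapeVec_neg_iff hα hβ hd, ← shapeVec_neg_iff hα' hβ' hd', h]
  subst hst hst'
  obtain ⟨i, hi⟩ := card_pos.mp hs
  obtain ⟨j, hj⟩ := card_pos.mp hs'
  have hj' : j ∉ s := disjoint_right.mp hd hj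
  have hαα' := congrFun h i
  have hββ' := congrFun h j
  simp only [shapeVec, hi, hj, hj', if_true, if_false, neg_inj] at hαα' hββ'
  rw [hαα', hββ']

lemma zero_notMem_image_shapeVec :
    (0 : ι → ℤ) ∉ (shapeData ι).image fun x => shapeVec x.1.1 x.1.2.1 x.2.1 x.2.2 := by
  rintro h
  obtain ⟨⟨⟨α, β, p, q⟩, s, s'⟩, hx, h0⟩ := mem_image.mp h
  obtain ⟨hσ, -, rfl, -⟩ := by simpa [shapeData] using hx
  obtain ⟨hα, -, hs, -⟩ := pos_of_mem_shapes hσ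
  obtain ⟨i, hi⟩ := card_pos.mp hs
  have := congrFun h0 i
  simp only [shapeVec, hi, if_true, Pi.zero_apply] at this
  omega

lemma card_shapeData : #(shapeData ι) = ∑ x ∈ shapes,
    (Fintype.card ι).choose x.2.2.1 * (Fintype.card ι - x.2.2.1).choose x.2.2.2 := by
  rw [shapeData, card_filter, sum_product]
  refine sum_congr rfl fun x _ => ?_
  rw [← card_filter_disjoint_card_eq, card_filter]

lemma sum_shapes_choose_add_one (m : ℕ) :
    ∑ x ∈ shapes, (m + 3).choose x.2.2.1 * (m + 3 - x.2.2.1).choose x.2.2.2 + 1 =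
      fBound (m + 3) := by
  have h4 : (m + 3) * (m + 2) * (m + 1) * m = 4 * ((m + 3).choose 2 * (m + 1).choose 2) := by
    qify
    simp only [Nat.cast_choose_two]
    push_cast
    ring
  rw [shapes, sum_insert (by decide), sum_insert (by decide), sum_insert (by decide),
    sum_insert (by decide), sum_singleton]
  show _ = (m + 3) * (m + 2) * (m + 1) * m / 4 + (m + 3) * (m + 2) * (m + 1) +
    2 * ((m + 3) * (m + 2)) + 1
  simp only [h4, Nat.mul_div_cancel_left _ four_pos, Nat.choose_one_right, Nat.reduceSubDiff]
  qify
  simp only [Nat.cast_choose_two]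
  push_cast
  ring

theorem card_doubleRatioExponents (h : 3 ≤ Fintype.card ι) :
    #(doubleRatioExponents ι) = fBound (Fintype.card ι) := by
  have : Nonempty ι := Fintype.card_pos_iff.mp (by omega)
  obtain ⟨m, hm⟩ := Nat.exists_eq_add_of_le' h
  rw [doubleRatioExponents_eq_shapeVecs, shapeVecs,
    card_insert_of_notMem zero_notMem_image_shapeVec, card_image_of_injOn shapeVec_injOn,
    card_shapeData, hm, sum_shapes_choose_add_one]

end Shapes

/-- For every `n ≥ 3` there is a nonzero polynomial `p` in `n` variables
over `ℂ` such that every tuple `t ∈ (ℂˣ)ⁿ` with `p(t) ≠ 0` has `|δ²{t₁,…,tₙ}| = f(n)`;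
i.e. the set of very regular elements contains a nonempty Zariski open set. -/
theorem very_regular_zariski_open (n : ℕ) (hn : 3 ≤ n) :
    ∃ p : MvPolynomial (Fin n) ℂ, p ≠ 0 ∧
      ∀ t : Fin n → ℂˣ, MvPolynomial.eval (fun i => (t i : ℂ)) p ≠ 0 →
        ((((Finset.univ.image t) / (Finset.univ.image t)) /
            ((Finset.univ.image t) / (Finset.univ.image t)) : Finset ℂˣ)).card = fBound n := by
  obtain ⟨p, hp, hinj⟩ :=
    exists_ne_zero_injOn_laurentMonomial (R := ℂ) (doubleRatioExponents (Fin n))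
  refine ⟨p, hp, fun t ht => ?_⟩
  rw [image_div_div_eq_image_laurentMonomial, card_image_of_injOn (hinj t ht),
    card_doubleRatioExponents (by simpa using hn), Fintype.card_fin]
end

section
/- Let n ≥ 1, let t₁, t₂ ∈ (ℂ×)ⁿ, and let D ⊆ (ℂ×)ⁿ be a Zariski dense subset, i.e., a subset such that the only polynomial in n variables over ℂ vanishing at every point of D is the zero polynomial. If for every x ∈ D the multiset {(t₁)ᵢ · xᵢ : i = 1, …, n} equals the multiset {(t₂)ᵢ · xᵢ : i = 1, …, n} (equivalently, the diagonal matrices diag(t₁)·diag(x) and diag(t₂)·diag(x) have the same spectrum with multiplicities), then t₁ = t₂. -/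
/-- Let `n ≥ 1`, `t₁, t₂ ∈ (ℂˣ)ⁿ` and `D ⊆ (ℂˣ)ⁿ` a Zariski dense subset.
If for every `x ∈ D` the multisets `{(t₁)ᵢ xᵢ}` and `{(t₂)ᵢ xᵢ}` coincide (i.e.
`diag(t₁)diag(x)` and `diag(t₂)diag(x)` have the same spectrum with multiplicities),
then `t₁ = t₂`. -/
theorem eq_of_spectra_eq_on_dense (n : ℕ) (hn : 1 ≤ n) (t₁ t₂ : Fin n → ℂˣ)
    (D : Set (Fin n → ℂˣ))
    (hD : ∀ p : MvPolynomial (Fin n) ℂ,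
      (∀ x ∈ D, MvPolynomial.eval (fun i => (x i : ℂ)) p = 0) → p = 0)
    (h : ∀ x ∈ D,
      (Finset.univ.val.map fun i : Fin n => t₁ i * x i) =
        (Finset.univ.val.map fun i : Fin n => t₂ i * x i)) :
    t₁ = t₂ := by
  set p : MvPolynomial (Fin n) ℂ :=
    ∑ i : Fin n, MvPolynomial.C ((t₁ i : ℂ) - (t₂ i : ℂ)) * MvPolynomial.X i with hp
  have hp0 : p = 0 := by
    apply hD
    intro x hx
    have hsum := congrArg (fun m : Multiset ℂˣ => ((m.map ((↑) : ℂˣ → ℂ)).sum)) (h x hx)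
    simp only [Multiset.map_map, Function.comp] at hsum
    have hsum' : (∑ i : Fin n, (t₁ i : ℂ) * (x i : ℂ)) =
        ∑ i : Fin n, (t₂ i : ℂ) * (x i : ℂ) := by
      simpa [Finset.sum, Units.val_mul] using hsum
    simp only [hp, map_sum, map_mul, MvPolynomial.eval_C, MvPolynomial.eval_X]
    rw [Finset.sum_congr rfl (fun i _ => by ring :
      ∀ i ∈ Finset.univ, ((t₁ i : ℂ) - t₂ i) * (x i : ℂ)
        = (t₁ i : ℂ) * x i - (t₂ i : ℂ) * x i)]
    rw [Finset.sum_sub_distrib, hsum', sub_self]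
  funext i
  have hc := congrArg (MvPolynomial.coeff (Finsupp.single i 1)) hp0
  have : (t₁ i : ℂ) - (t₂ i : ℂ) = 0 := by
    simpa [hp, MvPolynomial.coeff_sum, sub_mul, MvPolynomial.coeff_sub,
      MvPolynomial.coeff_C_mul, MvPolynomial.coeff_X',
      Finsupp.single_left_inj (one_ne_zero : (1:ℕ) ≠ 0), Finset.sum_sub_distrib,
      sub_eq_zero] using hc
  exact Units.ext (sub_eq_zero.mp this)
end

section
/- Let n ≥ 2 and let T be a maximal torus of SL_n(ℂ), i.e., T = g·D·g⁻¹ for some g ∈ SL_n(ℂ), where D is the subgroup of diagonal matrices of determinant 1. Then there exist α₁, α₂ ∈ SL_n(ℂ) such that the set T · (α₁ T α₁⁻¹) · (α₂ T α₂⁻¹) = {t₁ · (α₁ t₂ α₁⁻¹) · (α₂ t₃ α₂⁻¹) : t₁, t₂, t₃ ∈ T} spans Mat_n(ℂ) as a ℂ-vector space. -/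
/-!
Conjugating by `g` reduces to the diagonal torus `D`. Choose `a ∈ SL_n(ℂ)` with no zero entry
and take `α₁ = g a g⁻¹`, `α₂ = g a² g⁻¹`; the triple product becomes `g (D a D a D) (g a²)⁻¹`.
Over an algebraically closed field every invertible diagonal matrix is a scalar multiple of one
of determinant `1`, so `D` spans all diagonal matrices and in particular contains every `E_ii` in
its span. Hence the span of `D a D a D` contains `E_ii a E_ii a E_kk = a_ii a_ik E_ik`, i.e. every
matrix unit.
-/

open Matrix Pointwise Submodule

theorem Submodule.span_mul_mul_image_eq_top {R A : Type*} [CommSemiring R] [Semiring A]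
    [Algebra R A] {P Q : A} (hP : IsUnit P) (hQ : IsUnit Q) {s : Set A} (hs : span R s = ⊤) :
    span R ((fun x => P * x * Q) '' s) = ⊤ := by
  obtain ⟨P, rfl⟩ := hP
  obtain ⟨Q, rfl⟩ := hQ
  rw [show (fun x => ↑P * x * ↑Q) = LinearMap.mulLeftRight R ((P : A), (Q : A)) from rfl,
    span_image, hs, map_top, LinearMap.range_eq_top]
  exact fun y => ⟨↑P⁻¹ * y * ↑Q⁻¹, by simp [mul_assoc]⟩

namespace Matrix

theorem SpecialLinearGroup.isUnit {ι R : Type*} [Fintype ι] [DecidableEq ι] [CommRing R]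
    (A : SpecialLinearGroup ι R) : IsUnit (A : Matrix ι ι R) :=
  (isUnit_iff_isUnit_det _).2 (by rw [A.det_coe]; exact isUnit_one)

variable {ι K : Type*} [Fintype ι] [DecidableEq ι] [Field K]

variable (ι K) in
def diagonalTorus : Set (Matrix ι ι K) := {M | M.IsDiag ∧ M.det = 1}

theorem exists_det_smul_eq_one [IsAlgClosed K] [Nonempty ι] {M : Matrix ι ι K}
    (hM : M.det ≠ 0) : ∃ c : K, c ≠ 0 ∧ (c • M).det = 1 := by
  obtain ⟨c, hc⟩ := IsAlgClosed.exists_pow_nat_eq M.det⁻¹ (Fintype.card_pos (α := ι))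
  refine ⟨c, fun h => ?_, by rw [det_smul, hc, inv_mul_cancel₀ hM]⟩
  rw [h, zero_pow Fintype.card_ne_zero, eq_comm, inv_eq_zero] at hc
  exact hM hc

theorem exists_det_eq_one_forall_ne_zero [IsAlgClosed K] [CharZero K] :
    ∃ a : Matrix ι ι K, a.det = 1 ∧ ∀ i j, a i j ≠ 0 := by
  cases isEmpty_or_nonempty ι
  · exact ⟨1, det_isEmpty, isEmptyElim⟩
  -- `1 + J`, with `J` the all-ones matrix, has determinant `1 + card ι`.
  have hJ := det_one_add_replicateCol_mul_replicateRow (ι := Unit) (1 : ι → K) 1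
  rw [one_dotProduct_one] at hJ
  obtain ⟨c, hc, hcJ⟩ :=
    exists_det_smul_eq_one (hJ.trans_ne (by rw [add_comm]; exact Nat.cast_add_one_ne_zero _))
  refine ⟨_, hcJ, fun i j => mul_ne_zero hc ?_⟩
  rcases eq_or_ne i j with rfl | hij
  · norm_num [mul_apply]
  · simp [mul_apply, one_apply_ne hij]

theorem single_mem_span_diagonalTorus [IsAlgClosed K] [CharZero K] (i : ι) :
    single i i 1 ∈ span K (diagonalTorus ι K) := by
  have : Nonempty ι := ⟨i⟩
  have diagonal_mem (d : ι → K) (hd : ∀ j, d j ≠ 0) :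
      diagonal d ∈ span K (diagonalTorus ι K) := by
    obtain ⟨c, hc, hcd⟩ := exists_det_smul_eq_one (M := diagonal d)
      (by rw [det_diagonal]; exact Finset.prod_ne_zero_iff.2 fun j _ => hd j)
    rw [← inv_smul_smul₀ hc (diagonal d)]
    exact smul_mem _ _ (subset_span ⟨(isDiag_diagonal d).smul c, hcd⟩)
  have hsingle : single i i (1 : K) = diagonal (Pi.single i 1 + 1) - diagonal 1 := by
    rw [← diagonal_single, diagonal_sub]
    simp
  rw [hsingle]
  refine sub_mem (diagonal_mem _ fun j => ?_) (diagonal_mem _ fun _ => one_ne_zero)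
  rcases eq_or_ne j i with rfl | hj
  · norm_num
  · simp [hj]

theorem span_diagonalTorus_mul_mul_eq_top [IsAlgClosed K] [CharZero K] {a : Matrix ι ι K}
    (ha : ∀ i j, a i j ≠ 0) :
    span K (diagonalTorus ι K * {a} * diagonalTorus ι K * {a} * diagonalTorus ι K) = ⊤ := by
  simp only [← span_mul_span]
  rw [eq_top_iff, ← (stdBasis K ι ι).span_eq, span_le]
  rintro _ ⟨⟨i, k⟩, rfl⟩
  have hik : single i i 1 * a * single i i 1 * a * single k k 1 =
      (a i i * a i k) • single i k 1 := by
    simp only [single_mul_mul_single, one_mul, mul_one, smul_single, smul_eq_mul]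
  rw [stdBasis_eq_single, ← inv_smul_smul₀ (mul_ne_zero (ha i i) (ha i k)) (single i k 1), ← hik]
  have ha_mem : a ∈ K ∙ a := mem_span_singleton_self a
  exact smul_mem _ _ <| mul_mem_mul (mul_mem_mul (mul_mem_mul (mul_mem_mul
    (single_mem_span_diagonalTorus i) ha_mem) (single_mem_span_diagonalTorus i)) ha_mem)
    (single_mem_span_diagonalTorus k)

end Matrix

theorem torus_triple_product_spans_general (n : ℕ)
    (g : Matrix.SpecialLinearGroup (Fin n) ℂ)
    (T : Set (Matrix.SpecialLinearGroup (Fin n) ℂ))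
    (hT : T = {x | ∃ d : Matrix.SpecialLinearGroup (Fin n) ℂ,
      (∀ i j : Fin n, i ≠ j → d.val i j = 0) ∧ x = g * d * g⁻¹}) :
    ∃ α₁ α₂ : Matrix.SpecialLinearGroup (Fin n) ℂ,
      Submodule.span ℂ
        ((fun m : Matrix.SpecialLinearGroup (Fin n) ℂ => m.val) ''
          {x | ∃ t₁ ∈ T, ∃ t₂ ∈ T, ∃ t₃ ∈ T,
            x = t₁ * (α₁ * t₂ * α₁⁻¹) * (α₂ * t₃ * α₂⁻¹)}) =
      (⊤ : Submodule ℂ (Matrix (Fin n) (Fin n) ℂ)) := by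
  subst hT
  obtain ⟨a, ha_det, ha⟩ := exists_det_eq_one_forall_ne_zero (ι := Fin n) (K := ℂ)
  set A : SpecialLinearGroup (Fin n) ℂ := ⟨a, ha_det⟩
  refine ⟨g * A * g⁻¹, g * (A * A) * g⁻¹, eq_top_iff.2 ?_⟩
  rw [← span_mul_mul_image_eq_top g.isUnit (g * (A * A))⁻¹.isUnit
    (span_diagonalTorus_mul_mul_eq_top ha)]
  refine span_mono ?_
  rintro _ ⟨_, ⟨_, ⟨_, ⟨_, ⟨x, hx, _, rfl, rfl⟩, y, hy, rfl⟩, _, rfl, rfl⟩, z, hz, rfl⟩, rfl⟩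
  let toSL (M : Matrix (Fin n) (Fin n) ℂ) (hM : M ∈ diagonalTorus (Fin n) ℂ) :
      SpecialLinearGroup (Fin n) ℂ := ⟨M, hM.2⟩
  refine ⟨_, ⟨_, ⟨toSL x hx, fun _ _ h => hx.1 h, rfl⟩, _, ⟨toSL y hy, fun _ _ h => hy.1 h, rfl⟩,
    _, ⟨toSL z hz, fun _ _ h => hz.1 h, rfl⟩, rfl⟩, ?_⟩
  have hconj : g * toSL x hx * g⁻¹ * (g * A * g⁻¹ * (g * toSL y hy * g⁻¹) * (g * A * g⁻¹)⁻¹) *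
      (g * (A * A) * g⁻¹ * (g * toSL z hz * g⁻¹) * (g * (A * A) * g⁻¹)⁻¹) =
      g * (toSL x hx * A * toSL y hy * A * toSL z hz) * (g * (A * A))⁻¹ := by
    group
  rw [hconj]
  rfl

/-- Let `n ≥ 2` and let `T = g D g⁻¹` be a maximal torus of `SL_n(ℂ)`,
where `D` is the subgroup of diagonal matrices of determinant `1`. Then there are
`α₁, α₂ ∈ SL_n(ℂ)` such that `T · (α₁ T α₁⁻¹) · (α₂ T α₂⁻¹)` spans `Mat_n(ℂ)`. -/
theorem torus_triple_product_spans (n : ℕ) (hn : 2 ≤ n)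
    (g : Matrix.SpecialLinearGroup (Fin n) ℂ)
    (T : Set (Matrix.SpecialLinearGroup (Fin n) ℂ))
    (hT : T = {x | ∃ d : Matrix.SpecialLinearGroup (Fin n) ℂ,
      (∀ i j : Fin n, i ≠ j → d.val i j = 0) ∧ x = g * d * g⁻¹}) :
    ∃ α₁ α₂ : Matrix.SpecialLinearGroup (Fin n) ℂ,
      Submodule.span ℂ
        ((fun m : Matrix.SpecialLinearGroup (Fin n) ℂ => m.val) ''
          {x | ∃ t₁ ∈ T, ∃ t₂ ∈ T, ∃ t₃ ∈ T,
            x = t₁ * (α₁ * t₂ * α₁⁻¹) * (α₂ * t₃ * α₂⁻¹)}) =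
      (⊤ : Submodule ℂ (Matrix (Fin n) (Fin n) ℂ)) :=
  torus_triple_product_spans_general n g T hT
end

section
/- Let n ≥ 2, let D be the subgroup of diagonal matrices of determinant 1 in SL_n(ℂ), and let α₁ ∈ SL_n(ℂ) be the matrix with 1 in every diagonal entry, 1 in every entry of the last (rightmost) column, and 0 elsewhere. Then the ℂ-linear span of D ∪ α₁Dα₁⁻¹ contains every matrix β ∈ Mat_n(ℂ) whose (i,j) entry is 0 whenever i ≠ j and j < n (i.e., every matrix supported on the diagonal and the last column). -/
/-!
Write `α = 1 + N`, where `N` has ones in column `ℓ` off the diagonal. Then `N ^ 2 = 0`, so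
`α⁻¹ = 2 - α`, and for `k ≠ ℓ` one finds `α E_kk α⁻¹ = E_kk - E_kℓ`. It therefore suffices that
the diagonal determinant-one matrices span every `E_kk`: with `u t = diag(t, t⁻¹, 1, …)` (entries
at `k` and some `m ≠ k`) one has `E_kk = 4/3 (u 2 - 1) + 2/3 (u ½ - 1)`.
-/

open Matrix

variable {ι K : Type*} [Fintype ι] [DecidableEq ι]

theorem single_mem_span_prod_eq_one [Field K] [CharZero K] {k m : ι} (hkm : k ≠ m) :
    Pi.single k 1 ∈ Submodule.span K {v : ι → K | ∏ i, v i = 1} := by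
  let u : K → ι → K := fun t => Pi.mulSingle k t * Pi.mulSingle m t⁻¹
  have hu : ∀ t : K, t ≠ 0 → u t ∈ Submodule.span K {v : ι → K | ∏ i, v i = 1} := fun t ht =>
    Submodule.subset_span <| by
      simp [u, Finset.prod_mul_distrib, Finset.prod_pi_mulSingle', ht]
  have h1 : (1 : ι → K) ∈ Submodule.span K {v : ι → K | ∏ i, v i = 1} :=
    Submodule.subset_span (by simp)
  have key : Pi.single k 1 = (4 / 3 : K) • (u 2 - 1) + (2 / 3 : K) • (u 2⁻¹ - 1) := by
    funext i
    by_cases hik : i = k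
    · subst hik; norm_num [u, hkm]
    · by_cases him : i = m
      · subst him; norm_num [u, hik]
      · simp [u, hik, him]
  rw [key]
  exact add_mem (Submodule.smul_mem _ _ (sub_mem (hu 2 two_ne_zero) h1))
    (Submodule.smul_mem _ _ (sub_mem (hu 2⁻¹ (inv_ne_zero two_ne_zero)) h1))

variable (ι K) in
def diagDetOne [CommRing K] : Set (Matrix ι ι K) :=
  {x | x.det = 1 ∧ ∀ i j, i ≠ j → x i j = 0}

theorem single_self_mem_span_diagDetOne [Field K] [CharZero K] {k m : ι} (hkm : k ≠ m) :
    single k k 1 ∈ Submodule.span K (diagDetOne ι K) := by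
  have hsub : diagonal '' {v : ι → K | ∏ i, v i = 1} ⊆ diagDetOne ι K := by
    rintro _ ⟨v, hv, rfl⟩
    exact ⟨det_diagonal.trans hv, fun i j hij => diagonal_apply_ne v hij⟩
  rw [← diagonal_single]
  exact Submodule.span_mono hsub <|
    Submodule.apply_mem_span_image_of_mem_span (diagonalLinearMap ι K K)
      (single_mem_span_prod_eq_one hkm)

section colUnipotent

variable {R : Type*} [CommRing R] (ℓ : ι)

def colUnipotent : Matrix ι ι R := of fun i j => if i = j then 1 else if j = ℓ then 1 else 0

theorem colUnipotent_sub_one_mul_self :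
    (colUnipotent ℓ - 1 : Matrix ι ι R) * (colUnipotent ℓ - 1) = 0 := by
  ext i j
  simp only [colUnipotent, mul_apply, Matrix.sub_apply, one_apply, of_apply, Matrix.zero_apply]
  refine Finset.sum_eq_zero fun m _ => ?_
  by_cases hm : m = ℓ
  · subst hm
    rcases eq_or_ne m j with rfl | hj
    · simp
    · simp [hj, hj.symm]
  · simp [hm]

theorem colUnipotent_inv : (colUnipotent ℓ : Matrix ι ι R)⁻¹ = 2 - colUnipotent ℓ := by
  set α : Matrix ι ι R := colUnipotent ℓ
  apply inv_eq_right_inv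
  calc α * (2 - α) = 1 - (α - 1) * (α - 1) := by noncomm_ring
    _ = 1 := by rw [colUnipotent_sub_one_mul_self, sub_zero]

variable {ℓ}

theorem colUnipotent_mul_single_of_ne {k : ι} (hk : k ≠ ℓ) (j : ι) (c : R) :
    colUnipotent ℓ * single k j c = single k j c := by
  ext a b
  by_cases hb : b = j
  · subst hb
    rw [mul_single_apply_same]
    simp [colUnipotent, single_apply, hk]
    grind
  · rw [mul_single_apply_of_ne _ _ _ _ _ hb, single_apply_of_col_ne _ _ (Ne.symm hb)]

theorem single_mul_colUnipotent_of_ne {k : ι} (hk : k ≠ ℓ) (i : ι) (c : R) :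
    single i k c * colUnipotent ℓ = single i k c + single i ℓ c := by
  ext a b
  by_cases ha : a = i
  · subst ha
    rw [single_mul_apply_same]
    simp [colUnipotent, single_apply]
    grind
  · rw [single_mul_apply_of_ne _ _ _ _ _ ha, Matrix.add_apply,
      single_apply_of_row_ne (Ne.symm ha), single_apply_of_row_ne (Ne.symm ha), add_zero]

theorem colUnipotent_conj_single_self {k : ι} (hk : k ≠ ℓ) :
    colUnipotent ℓ * single k k (1 : R) * (colUnipotent ℓ)⁻¹ = single k k 1 - single k ℓ 1 := by
  rw [colUnipotent_mul_single_of_ne hk, colUnipotent_inv, mul_sub, single_mul_colUnipotent_of_ne hk,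
    mul_two]
  abel

end colUnipotent

theorem single_mem_span_diagDetOne_union_conj [Field K] [CharZero K] [Nontrivial ι] (ℓ : ι)
    {i j : ι} (hij : i = j ∨ j = ℓ) :
    single i j 1 ∈ Submodule.span K
      (diagDetOne ι K ∪ (fun x => colUnipotent ℓ * x * (colUnipotent ℓ)⁻¹) '' diagDetOne ι K) := by
  let conj : Matrix ι ι K →ₗ[K] Matrix ι ι K :=
    LinearMap.mulRight K (colUnipotent ℓ)⁻¹ ∘ₗ LinearMap.mulLeft K (colUnipotent ℓ)
  have hdiag (k : ι) : single k k 1 ∈ Submodule.span K (diagDetOne ι K) := by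
    obtain ⟨m, hm⟩ := exists_ne k
    exact single_self_mem_span_diagDetOne hm.symm
  have hconj (k : ι) : conj (single k k 1) ∈ Submodule.span K
      (diagDetOne ι K ∪ (fun x => colUnipotent ℓ * x * (colUnipotent ℓ)⁻¹) '' diagDetOne ι K) :=
    Submodule.span_mono Set.subset_union_right
      (Submodule.apply_mem_span_image_of_mem_span conj (hdiag k))
  rcases eq_or_ne i j with rfl | hne
  · exact Submodule.span_mono Set.subset_union_left (hdiag i)
  obtain rfl : j = ℓ := hij.resolve_left hne
  have hcol : single i j 1 = single i i 1 - conj (single i i 1) := by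
    simp only [conj, LinearMap.comp_apply, LinearMap.mulLeft_apply, LinearMap.mulRight_apply,
      colUnipotent_conj_single_self hne]
    abel
  rw [hcol]
  exact sub_mem (Submodule.span_mono Set.subset_union_left (hdiag i)) (hconj i)

/-- Let `n ≥ 2`, let `D` be the set of diagonal determinant-one matrices
in `SL_n(ℂ)`, and let `α₁` be the matrix with `1` on the diagonal and in every entry of the
last column, zero elsewhere. Then the `ℂ`-span of `D ∪ α₁Dα₁⁻¹` contains every matrix
supported on the diagonal and the last column. -/
theorem span_diag_union_conj_col (n : ℕ) (hn : 2 ≤ n)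
    (D : Set (Matrix (Fin n) (Fin n) ℂ))
    (hD : D = {x | x.det = 1 ∧ ∀ i j : Fin n, i ≠ j → x i j = 0})
    (α₁ : Matrix (Fin n) (Fin n) ℂ)
    (hα₁ : α₁ = Matrix.of fun i j : Fin n =>
      if i = j then 1 else if j = (⟨n - 1, by omega⟩ : Fin n) then 1 else 0)
    (β : Matrix (Fin n) (Fin n) ℂ)
    (hβ : ∀ i j : Fin n, i ≠ j → (j : ℕ) < n - 1 → β i j = 0) :
    β ∈ Submodule.span ℂ (D ∪ (fun x => α₁ * x * α₁⁻¹) '' D) := by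
  subst hD hα₁
  have : Nontrivial (Fin n) := Fin.nontrivial_iff_two_le.mpr hn
  rw [matrix_eq_sum_single β]
  refine Submodule.sum_mem _ fun i _ => Submodule.sum_mem _ fun j _ => ?_
  by_cases hij : i = j ∨ j = ⟨n - 1, by omega⟩
  · rw [← mul_one (β i j), ← smul_eq_mul, ← smul_single]
    exact Submodule.smul_mem _ _ (single_mem_span_diagDetOne_union_conj _ hij)
  · rw [not_or] at hij
    have hj : (j : ℕ) ≠ n - 1 := fun h => hij.2 (Fin.ext h)
    rw [hβ i j hij.1 (by omega), single_zero]
    exact zero_mem _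
end

section
/- Let d ≥ 3 and let O be a ring of S-integers in a number field. In Γ = PSL_d(O), let ε denote the image of the elementary matrix e_{1,d}(1). Then the center of the centralizer of ε in Γ equals E_{1,d}(O) = {image of e_{1,d}(a) : a ∈ O}; that is, Z(Cent_Γ(ε)) = {ē_{1,d}(a) : a ∈ O}. -/
open Matrix IsDedekindDomain NumberField

/-- The elementary matrix `e_{i,j}(a)` as an element of `SL_n(A)`. -/
def elemSL {n : ℕ} {A : Type*} [CommRing A] (i j : Fin n) (h : i ≠ j) (a : A) :
    Matrix.SpecialLinearGroup (Fin n) A :=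
  ⟨Matrix.transvection i j a, Matrix.det_transvection_of_ne i j h a⟩

/-- `PSL_d(R) = SL_d(R) / Z(SL_d(R))`. -/
abbrev PSL (d : ℕ) (R : Type*) [CommRing R] : Type _ :=
  Matrix.SpecialLinearGroup (Fin d) R ⧸ Subgroup.center (Matrix.SpecialLinearGroup (Fin d) R)

/-!
Every `ē_{1,j}(1)` and `ē_{i,d}(1)` commutes with `ε`, so an element of the centre of the
centralizer commutes with all of them. Commutation in `PSL_d` lifts to `SL_d` up to a central
scalar `r`; comparing traces of a transvection and its conjugate gives `r · d = d`, so `r = 1`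
in characteristic zero. A matrix commuting with all `E_{1j}` and `E_{id}` has the form
`t · 1 + s · E_{1d}`, and since `t^d = 1` it is a central scalar times `e_{1,d}(t^{d-1} s)`.
Conversely, a lift of anything centralizing `ε` commutes with `E_{1d}`, hence with every
`e_{1,d}(a)`.
-/

namespace Matrix

variable {n R : Type*} [Fintype n] [DecidableEq n] [CommRing R]

theorem commute_transvection_transvection {i j k l : n} (hjk : j ≠ k) (hli : l ≠ i) (a b : R) :
    Commute (transvection i j a) (transvection k l b) := by
  unfold transvection
  have hsingle : Commute (single i j a) (single k l b) := by
    rw [Commute, SemiconjBy, single_mul_single_of_ne _ _ _ _ hjk,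
      single_mul_single_of_ne _ _ _ _ hli]
  exact (Commute.one_right _).add_right ((Commute.one_left _).add_left hsingle)

theorem commute_transvection_of_commute_single {p q : n} {N : Matrix n n R}
    (h : Commute (single p q (1 : R)) N) (a : R) : Commute (transvection p q a) N := by
  rw [transvection, ← mul_one a, ← smul_eq_mul, ← smul_single]
  exact (Commute.one_left N).add_left (h.smul_left a)

theorem commute_single_of_commute_transvection {p q : n} {N : Matrix n n R}
    (h : Commute (transvection p q (1 : R)) N) : Commute (single p q (1 : R)) N := by
  simpa [transvection] using h.sub_left (Commute.one_left N)

theorem trace_transvection {p q : n} (hpq : p ≠ q) (a : R) :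
    trace (transvection p q a) = Fintype.card n := by
  simp [transvection, trace_add, trace_single_eq_of_ne p q a hpq]

theorem eq_scalar_add_single_of_commute_single {z w : n} (hzw : z ≠ w) {M : Matrix n n R}
    (hrow : ∀ j ≠ z, Commute (single z j (1 : R)) M)
    (hcol : ∀ i ≠ w, Commute (single i w (1 : R)) M) :
    M = scalar n (M z z) + single z w (M z w) := by
  ext k l
  by_cases hkl : k = l
  · subst hkl
    have hdiag : single z w (M z w) k k = 0 := congrFun (diag_single_of_ne _ _ _ hzw) k
    rcases eq_or_ne k z with rfl | hkz
    · simp [hdiag]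
    · simp [hdiag, diag_eq_of_commute_single (hrow k hkz)]
  · rcases eq_or_ne k z with rfl | hkz
    · rcases eq_or_ne l w with rfl | hlw
      · simp [hkl]
      · simp [hkl, col_eq_zero_of_commute_single (hcol l hlw) hkl,
          single_apply_of_col_ne _ _ (Ne.symm hlw)]
    · simp [hkl, row_eq_zero_of_commute_single (hrow k hkz) (Ne.symm hkl),
        single_apply_of_row_ne (Ne.symm hkz)]

theorem det_scalar_add_single_of_lt [LinearOrder n] {z w : n} (hzw : z < w) (t s : R) :
    det (scalar n t + single z w s) = t ^ Fintype.card n := by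
  rw [scalar_apply, det_of_isUpperTriangular
    ((blockTriangular_diagonal _).add (blockTriangular_single hzw.le s))]
  have hdiag (k : n) : single z w s k k = 0 := congrFun (diag_single_of_ne z w s hzw.ne) k
  simp [hdiag]

end Matrix

namespace PSL

open Matrix.SpecialLinearGroup

variable {d : ℕ} {R : Type*} [CommRing R]

theorem commute_of_commute_mk [IsDomain R] {A B : SpecialLinearGroup (Fin d) R}
    (hA : trace (A : Matrix (Fin d) (Fin d) R) ≠ 0)
    (h : Commute (QuotientGroup.mk A : PSL d R) (QuotientGroup.mk B)) : Commute A B := by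
  have hconj : (QuotientGroup.mk (B * A * B⁻¹) : PSL d R) = QuotientGroup.mk A := by
    rw [QuotientGroup.mk_mul, QuotientGroup.mk_mul, QuotientGroup.mk_inv, ← h.eq,
      mul_inv_cancel_right]
  obtain ⟨r, -, hr⟩ := mem_center_iff.mp (QuotientGroup.eq.mp hconj.symm)
  have hmat : ((B * A * B⁻¹ : SpecialLinearGroup (Fin d) R) : Matrix (Fin d) (Fin d) R)
      = A * scalar (Fin d) r := by
    rw [hr, ← coe_mul, mul_inv_cancel_left]
  -- conjugation preserves the trace, so `trace A = r * trace A`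
  have htrace : trace ((A : Matrix (Fin d) (Fin d) R) * scalar (Fin d) r)
      = trace (A : Matrix (Fin d) (Fin d) R) := by
    rw [← hmat, coe_mul, coe_mul, trace_mul_cycle, ← coe_mul, ← coe_mul, inv_mul_cancel,
      one_mul]
  have hr1 : r = 1 := by
    rw [scalar_apply, ← smul_one_eq_diagonal, mul_smul_comm, mul_one, trace_smul,
      smul_eq_mul] at htrace
    exact (mul_eq_right₀ hA).mp htrace
  have hfix : B * A * B⁻¹ = A := Subtype.ext (by rw [hmat, hr1, map_one, mul_one])
  exact (mul_inv_eq_iff_eq_mul.mp hfix).symm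

theorem commute_single_of_commute_mk_elemSL [IsDomain R] [CharZero R] {p q : Fin d}
    (hpq : p ≠ q) {N : SpecialLinearGroup (Fin d) R}
    (h : Commute (QuotientGroup.mk (elemSL p q hpq 1) : PSL d R) (QuotientGroup.mk N)) :
    Commute (single p q (1 : R)) (N : Matrix (Fin d) (Fin d) R) := by
  have htrace : trace (Matrix.transvection p q (1 : R)) ≠ 0 := by
    rw [trace_transvection hpq, Fintype.card_fin]
    exact Nat.cast_ne_zero.mpr p.pos.ne'
  exact commute_single_of_commute_transvection ((commute_of_commute_mk htrace h).map coeMonoidHom)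

theorem commute_mk_elemSL_of_commute_single {p q : Fin d} (hpq : p ≠ q)
    {N : SpecialLinearGroup (Fin d) R}
    (h : Commute (single p q (1 : R)) (N : Matrix (Fin d) (Fin d) R)) (a : R) :
    Commute (QuotientGroup.mk (elemSL p q hpq a) : PSL d R) (QuotientGroup.mk N) := by
  have hsl : Commute (elemSL p q hpq a) N :=
    Subtype.ext (commute_transvection_of_commute_single h a).eq
  exact hsl.map (QuotientGroup.mk' _)

theorem commute_mk_elemSL {i j k l : Fin d} (hij : i ≠ j) (hkl : k ≠ l) (hjk : j ≠ k)
    (hli : l ≠ i) (a b : R) :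
    Commute (QuotientGroup.mk (elemSL i j hij a) : PSL d R)
      (QuotientGroup.mk (elemSL k l hkl b)) := by
  have hsl : Commute (elemSL i j hij a) (elemSL k l hkl b) :=
    Subtype.ext (commute_transvection_transvection hjk hli a b).eq
  exact hsl.map (QuotientGroup.mk' _)

theorem mk_eq_mk_elemSL_of_coe_eq {z w : Fin d} (hzw : z < w) {M : SpecialLinearGroup (Fin d) R}
    {t s : R} (hM : (M : Matrix (Fin d) (Fin d) R) = scalar (Fin d) t + single z w s) :
    (QuotientGroup.mk M : PSL d R) = QuotientGroup.mk (elemSL z w hzw.ne (t ^ (d - 1) * s)) := by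
  have htd : t ^ d = 1 := by
    have hdet := M.det_coe
    rwa [hM, det_scalar_add_single_of_lt hzw, Fintype.card_fin] at hdet
  have hts : t * (t ^ (d - 1) * s) = s := by
    rw [← mul_assoc, ← pow_succ', Nat.sub_add_cancel z.pos, htd, one_mul]
  let C : SpecialLinearGroup (Fin d) R := ⟨scalar (Fin d) t, by simp [htd]⟩
  have hC : C ∈ Subgroup.center (SpecialLinearGroup (Fin d) R) :=
    mem_center_iff.mpr ⟨t, by rw [Fintype.card_fin, htd], rfl⟩
  have hMC : M = C * elemSL z w hzw.ne (t ^ (d - 1) * s) := by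
    apply Subtype.ext
    rw [hM, coe_mul]
    change _ = scalar (Fin d) t * Matrix.transvection z w _
    rw [Matrix.transvection, mul_add, mul_one, scalar_apply, ← smul_eq_diagonal_mul, smul_single,
      smul_eq_mul, hts]
  rw [hMC, QuotientGroup.mk_mul, (QuotientGroup.eq_one_iff _).mpr hC, one_mul]

end PSL

theorem center_centralizer_eq_elem (d : ℕ) (hd : 3 ≤ d) (K : Type) [Field K] [NumberField K]
    (O : Subalgebra (𝓞 K) K)
    (ε : PSL d O)
    (hε : ε = QuotientGroup.mk (elemSL ⟨0, by omega⟩ ⟨d - 1, by omega⟩ (by simp; omega)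
      (1 : O))) :
    ∀ x : PSL d O,
      x ∈ Subgroup.map (Subgroup.centralizer {ε}).subtype
          (Subgroup.center (Subgroup.centralizer {ε})) ↔
        ∃ a : O, x = QuotientGroup.mk
          (elemSL ⟨0, by omega⟩ ⟨d - 1, by omega⟩ (by simp; omega) a) := by
  intro x
  set z : Fin d := ⟨0, by omega⟩
  set w : Fin d := ⟨d - 1, by omega⟩
  have hzw : z < w := Fin.mk_lt_mk.mpr (by omega)
  have hcent {p q : Fin d} (hpq : p ≠ q) (hqz : q ≠ z) (hwp : w ≠ p) (a : O) :
      (QuotientGroup.mk (elemSL p q hpq a) : PSL d O) ∈ Subgroup.centralizer {ε} := by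
    rw [hε, Subgroup.mem_centralizer_singleton_iff]
    exact (PSL.commute_mk_elemSL hpq hzw.ne hqz hwp a 1).eq
  constructor
  · rintro ⟨y, hy, rfl⟩
    obtain ⟨M, hM⟩ := QuotientGroup.mk_surjective y.1
    have hcomm {p q : Fin d} (hpq : p ≠ q) (hqz : q ≠ z) (hwp : w ≠ p) :
        Commute (single p q (1 : O)) (M : Matrix (Fin d) (Fin d) O) :=
      PSL.commute_single_of_commute_mk_elemSL hpq <| hM ▸
        congrArg Subtype.val (Subgroup.mem_center_iff.mp hy ⟨_, hcent hpq hqz hwp 1⟩)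
    have hshape := eq_scalar_add_single_of_commute_single hzw.ne
      (fun j hj => hcomm (Ne.symm hj) hj hzw.ne') (fun i hi => hcomm hi hzw.ne' (Ne.symm hi))
    exact ⟨_, hM ▸ PSL.mk_eq_mk_elemSL_of_coe_eq hzw hshape⟩
  · rintro ⟨a, rfl⟩
    refine ⟨⟨_, hcent hzw.ne hzw.ne' hzw.ne' a⟩, Subgroup.mem_center_iff.mpr ?_, rfl⟩
    rintro ⟨g, hg⟩
    obtain ⟨N, rfl⟩ := QuotientGroup.mk_surjective g
    rw [hε, Subgroup.mem_centralizer_singleton_iff] at hg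
    have hN := PSL.commute_single_of_commute_mk_elemSL hzw.ne (Commute.symm hg)
    exact Subtype.ext (PSL.commute_mk_elemSL_of_commute_single hzw.ne hN a).symm.eq
end
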